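/- arXiv:2205.09642 — 6 statements merged into one kernel-verified Lean document; each statement's English description precedes it below -/
import Mathlib

section
/- Define for λ > −μ̃ the operators W_λ(η, g) = (0, h) with h(a) = e^{−λa} Π(0,a) η + ∫_0^a e^{−λ(a−s)} Π(s,a) g(s) ds. Then for all ν ≠ λ with ν, λ > −μ̃, the resolvent identity W_ν W_λ = (W_λ − W_ν)/(ν − λ) holds, i.e. the family {W_λ} is a pseudoresolvent. -/
/-!
Writing `F_λ(s) = e^{-λs} v + ∫₀ˢ e^{-λ(s-t)} u(t) dt`, one has `F_λ' = -λ F_λ + u`, hence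
`d/ds [e^{-ν(a-s)} F_λ(s)] = (ν - λ) e^{-ν(a-s)} F_λ(s) + e^{-ν(a-s)} u(s)`. Integrating over
`[0, a]` gives `(ν - λ) ∫₀ᵃ e^{-ν(a-s)} F_λ(s) ds = F_λ(a) - F_ν(a)`, the resolvent identity
for the trivial evolution family. The general case reduces to it because the cocycle property
`Π(s,a) Π(t,s) = Π(t,a)` moves `Π(s,a)` inside `F_λ(s)`.
-/

open MeasureTheory

theorem Continuous.clm_apply_of_forall_continuous {𝕜 α E F : Type*} [NontriviallyNormedField 𝕜]
    [TopologicalSpace α] [LocallyCompactSpace α]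
    [NormedAddCommGroup E] [NormedSpace 𝕜 E] [CompleteSpace E]
    [NormedAddCommGroup F] [NormedSpace 𝕜 F]
    {T : α → E →L[𝕜] F} (hT : ∀ v, Continuous fun t => T t v) {g : α → E} (hg : Continuous g) :
    Continuous fun t => T t (g t) := by
  refine continuous_iff_continuousAt.2 fun t₀ => ?_
  obtain ⟨K, hK, hKt₀⟩ := exists_compact_mem_nhds t₀
  -- Banach–Steinhaus: the operators `T t`, `t ∈ K`, are uniformly bounded.
  obtain ⟨C, hC⟩ : ∃ C, ∀ t : K, ‖T t‖ ≤ C := by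
    refine banach_steinhaus fun v => ?_
    obtain ⟨C, hC⟩ := hK.exists_bound_of_continuousOn (hT v).continuousOn
    exact ⟨C, fun t => hC t t.2⟩
  have hsmall : Filter.Tendsto (fun t => T t (g t - g t₀)) (nhds t₀) (nhds 0) := by
    refine squeeze_zero_norm' (a := fun t => C * ‖g t - g t₀‖) ?_ ?_
    · filter_upwards [hKt₀] with t ht
      exact (T t).le_of_opNorm_le (hC ⟨t, ht⟩) _
    · simpa using ((hg.sub (continuous_const (y := g t₀))).norm.const_mul C).tendsto t₀
  simpa [ContinuousAt, map_sub] using hsmall.add ((hT (g t₀)).tendsto t₀)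

section Duhamel

variable {X : Type*} [NormedAddCommGroup X] [NormedSpace ℝ X]

/-- The variation-of-constants solution of `F' = -l F + u`, `F 0 = v`. -/
noncomputable def duhamel (l : ℝ) (v : X) (u : ℝ → X) (s : ℝ) : X :=
  Real.exp (-(l * s)) • v + ∫ t in (0:ℝ)..s, Real.exp (-(l * (s - t))) • u t

theorem duhamel_zero (l : ℝ) (v : X) (u : ℝ → X) : duhamel l v u 0 = v := by
  simp [duhamel]

theorem duhamel_eq_exp_smul (l : ℝ) (v : X) (u : ℝ → X) (s : ℝ) :
    duhamel l v u s = Real.exp (-(l * s)) • (v + ∫ t in (0:ℝ)..s, Real.exp (l * t) • u t) := by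
  rw [duhamel, smul_add, ← intervalIntegral.integral_smul]
  congr 1
  refine intervalIntegral.integral_congr fun t _ => ?_
  simp only [smul_smul, ← Real.exp_add]
  ring_nf

variable [CompleteSpace X]

theorem ContinuousLinearMap.map_duhamel {Y : Type*} [NormedAddCommGroup Y] [NormedSpace ℝ Y]
    [CompleteSpace Y] (T : X →L[ℝ] Y) (l : ℝ) (v : X) {u : ℝ → X} (hu : Continuous u) (s : ℝ) :
    T (duhamel l v u s) = duhamel l (T v) (fun t => T (u t)) s := by
  have hexp : Continuous fun t => Real.exp (-(l * (s - t))) := by fun_prop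
  have hint : IntervalIntegrable (fun t => Real.exp (-(l * (s - t))) • u t) volume 0 s :=
    (hexp.smul hu).intervalIntegrable 0 s
  simp only [duhamel, map_add, map_smul, ← T.intervalIntegral_comp_comm hint]

theorem hasDerivAt_duhamel (l : ℝ) (v : X) {u : ℝ → X} (hu : Continuous u) (s : ℝ) :
    HasDerivAt (duhamel l v u) (-l • duhamel l v u s + u s) s := by
  have hexp : HasDerivAt (fun s => Real.exp (-(l * s))) (Real.exp (-(l * s)) * -l) s := by
    simpa using ((hasDerivAt_id s).const_mul l).neg.exp
  have hw : Continuous fun t => Real.exp (l * t) • u t := by fun_prop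
  have hprim := hw.integral_hasStrictDerivAt 0 s
  rw [show duhamel l v u = _ from funext (duhamel_eq_exp_smul l v u)]
  refine (hexp.smul (hprim.hasDerivAt.const_add v)).congr_deriv ?_
  rw [smul_smul, ← Real.exp_add, neg_add_cancel, Real.exp_zero, one_smul, mul_comm, mul_smul]
  module

theorem continuous_duhamel (l : ℝ) (v : X) {u : ℝ → X} (hu : Continuous u) :
    Continuous (duhamel l v u) :=
  continuous_iff_continuousAt.2 fun s => (hasDerivAt_duhamel l v hu s).continuousAt

theorem integral_exp_smul_duhamel {l ν : ℝ} (hne : ν ≠ l) (v : X) {u : ℝ → X}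
    (hu : Continuous u) (a : ℝ) :
    ∫ s in (0:ℝ)..a, Real.exp (-(ν * (a - s))) • duhamel l v u s =
      (ν - l)⁻¹ • (duhamel l v u a - duhamel ν v u a) := by
  set e : ℝ → ℝ := fun s => Real.exp (-(ν * (a - s)))
  have he : ∀ s, HasDerivAt e (ν * e s) s := fun s => by
    simpa [e, mul_comm] using (((hasDerivAt_id s).const_sub a).const_mul ν).neg.exp
  have hderiv : ∀ s, HasDerivAt (fun s => e s • duhamel l v u s)
      ((ν - l) • (e s • duhamel l v u s) + e s • u s) s := fun s => by
    refine ((he s).smul (hasDerivAt_duhamel l v hu s)).congr_deriv ?_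
    module
  have he_cont : Continuous e := by fun_prop
  have hF_cont : Continuous fun s => (ν - l) • (e s • duhamel l v u s) :=
    (he_cont.smul (continuous_duhamel l v hu)).const_smul _
  have hG_cont : Continuous fun s => e s • u s := he_cont.smul hu
  have hFTC := intervalIntegral.integral_eq_sub_of_hasDerivAt (fun s _ => hderiv s)
    ((hF_cont.add hG_cont).intervalIntegrable 0 a)
  rw [intervalIntegral.integral_add (hF_cont.intervalIntegrable 0 a)
      (hG_cont.intervalIntegrable 0 a), intervalIntegral.integral_smul] at hFTC
  have he_a : e a = 1 := by simp [e]
  rw [eq_inv_smul_iff₀ (sub_ne_zero.2 hne), duhamel.eq_1 ν v u a]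
  simp only [he_a, one_smul, duhamel_zero, e, sub_zero] at hFTC
  linear_combination (norm := module) hFTC

end Duhamel

theorem continuous_evolution_apply {X : Type*} [NormedAddCommGroup X] [NormedSpace ℝ X]
    [CompleteSpace X] {Pi : ℝ → ℝ → (X →L[ℝ] X)}
    (hPicont : ∀ v : X, Continuous fun p : ℝ × ℝ => Pi p.1 p.2 v) {g : ℝ → X} (hg : Continuous g)
    (a : ℝ) : Continuous fun t => Pi t a (g t) :=
  Continuous.clm_apply_of_forall_continuous
    (fun v => (hPicont v).comp (continuous_id.prodMk continuous_const)) hg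

theorem evolution_apply_duhamel {X : Type*} [NormedAddCommGroup X] [NormedSpace ℝ X]
    [CompleteSpace X] (Pi : ℝ → ℝ → (X →L[ℝ] X))
    (hcomp : ∀ τ s a : ℝ, τ ≤ s → s ≤ a → Pi τ a = (Pi s a).comp (Pi τ s))
    (hPicont : ∀ v : X, Continuous fun p : ℝ × ℝ => Pi p.1 p.2 v)
    (l : ℝ) (η : X) {g : ℝ → X} (hg : Continuous g) {s a : ℝ} (hs : 0 ≤ s) (hsa : s ≤ a) :
    Pi s a (duhamel l (Pi 0 s η) (fun t => Pi t s (g t)) s) =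
      duhamel l (Pi 0 a η) (fun t => Pi t a (g t)) s := by
  rw [(Pi s a).map_duhamel l _ (continuous_evolution_apply hPicont hg s), duhamel, duhamel,
    ← ContinuousLinearMap.comp_apply, ← hcomp 0 s a hs hsa]
  congr 1
  refine intervalIntegral.integral_congr fun t ht => ?_
  rw [Set.uIcc_of_le hs] at ht
  simp only [← ContinuousLinearMap.comp_apply, ← hcomp t s a ht.2 hsa]

theorem stmt_2_general {X : Type*} [NormedAddCommGroup X] [NormedSpace ℝ X] [CompleteSpace X]
    (Pi : ℝ → ℝ → (X →L[ℝ] X))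
    (hcomp : ∀ τ s a : ℝ, τ ≤ s → s ≤ a → Pi τ a = (Pi s a).comp (Pi τ s))
    (hPicont : ∀ v : X, Continuous fun p : ℝ × ℝ => Pi p.1 p.2 v)
    (η : X) (g : ℝ → X) (hg : Continuous g)
    (lam ν : ℝ) (hne : ν ≠ lam) :
    ∀ a : ℝ, 0 ≤ a →
      (Real.exp (-(ν * a)) • Pi 0 a 0 +
        ∫ s in (0:ℝ)..a, Real.exp (-(ν * (a - s))) •
          Pi s a (Real.exp (-(lam * s)) • Pi 0 s η +
            ∫ t in (0:ℝ)..s, Real.exp (-(lam * (s - t))) • Pi t s (g t))) =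
      (ν - lam)⁻¹ •
        ((Real.exp (-(lam * a)) • Pi 0 a η +
            ∫ s in (0:ℝ)..a, Real.exp (-(lam * (a - s))) • Pi s a (g s)) -
          (Real.exp (-(ν * a)) • Pi 0 a η +
            ∫ s in (0:ℝ)..a, Real.exp (-(ν * (a - s))) • Pi s a (g s))) := by
  intro a ha
  rw [map_zero, smul_zero, zero_add]
  refine (intervalIntegral.integral_congr fun s hs => ?_).trans
    (integral_exp_smul_duhamel hne (Pi 0 a η) (continuous_evolution_apply hPicont hg a) a)
  rw [Set.uIcc_of_le ha] at hs
  exact congrArg _ (evolution_apply_duhamel Pi hcomp hPicont lam η hg hs.1 hs.2)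

/-- The family `W_λ(η,g) = (0,h)` with
`h(a) = e^{-λa} Π(0,a)η + ∫_0^a e^{-λ(a-s)} Π(s,a) g(s) ds` satisfies the resolvent
identity `W_ν W_λ = (W_λ - W_ν)/(ν - λ)` (stated on the second component). -/
theorem stmt_2 {X : Type*} [NormedAddCommGroup X] [NormedSpace ℝ X] [CompleteSpace X]
    (μt : ℝ) (hμt : 0 < μt)
    (Pi : ℝ → ℝ → (X →L[ℝ] X))
    (hid : ∀ a : ℝ, Pi a a = ContinuousLinearMap.id ℝ X)
    (hcomp : ∀ τ s a : ℝ, τ ≤ s → s ≤ a → Pi τ a = (Pi s a).comp (Pi τ s))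
    (hPicont : ∀ v : X, Continuous fun p : ℝ × ℝ => Pi p.1 p.2 v)
    (η : X) (g : ℝ → X) (hg : Continuous g)
    (lam ν : ℝ) (hlam : -μt < lam) (hν : -μt < ν) (hne : ν ≠ lam) :
    ∀ a : ℝ, 0 ≤ a →
      (Real.exp (-(ν * a)) • Pi 0 a 0 +
        ∫ s in (0:ℝ)..a, Real.exp (-(ν * (a - s))) •
          Pi s a (Real.exp (-(lam * s)) • Pi 0 s η +
            ∫ t in (0:ℝ)..s, Real.exp (-(lam * (s - t))) • Pi t s (g t))) =
      (ν - lam)⁻¹ •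
        ((Real.exp (-(lam * a)) • Pi 0 a η +
            ∫ s in (0:ℝ)..a, Real.exp (-(lam * (a - s))) • Pi s a (g s)) -
          (Real.exp (-(ν * a)) • Pi 0 a η +
            ∫ s in (0:ℝ)..a, Real.exp (-(ν * (a - s))) • Pi s a (g s))) :=
  stmt_2_general Pi hcomp hPicont η g hg lam ν hne
end

section
/- For λ > −μ̃, the operator W_λ defined by W_λ(η,g) = (0, h) with h(a) = e^{−λa} Π(0,a)η + ∫_0^a e^{−λ(a−s)} Π(s,a) g(s) ds satisfies the norm bound ‖W_λ‖ ≤ 1/(λ + μ̃). -/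
open MeasureTheory Set
open scoped ENNReal

/-!
With `c = λ + μ̃ > 0` and the kernel `k(x) = 𝟙_{x ≥ 0} e^{-c x}`, the bound on `Π` gives, for
`a ∈ [0, â)`, the pointwise estimate `‖h(a)‖ ≤ k(a) ‖η‖ + (k ∗ ‖g‖)(a)`. Integrating over `a` and
using Tonelli, the convolution term integrates to `‖k‖₁ ‖g‖₁`, and `‖k‖₁ = 1 / c`. Everything is
done with lower Lebesgue integrals, so no measurability or integrability of `h` is needed.
-/

noncomputable def expKernel (c x : ℝ) : ℝ≥0∞ :=
  (Ici 0).indicator (fun x => ENNReal.ofReal (Real.exp (-(c * x)))) x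

lemma measurable_expKernel (c : ℝ) : Measurable (expKernel c) :=
  (ENNReal.measurable_ofReal.comp (by fun_prop)).indicator measurableSet_Ici

lemma lintegral_expKernel {c : ℝ} (hc : 0 < c) :
    ∫⁻ x, expKernel c x = ENNReal.ofReal (1 / c) := by
  have hint : IntegrableOn (fun x => Real.exp (-c * x)) (Ioi 0) :=
    integrableOn_exp_mul_Ioi (neg_neg_of_pos hc) 0
  unfold expKernel
  rw [lintegral_indicator measurableSet_Ici, setLIntegral_congr Ioi_ae_eq_Ici.symm]
  simp_rw [← neg_mul]
  rw [← ofReal_integral_eq_lintegral_ofReal hint (ae_of_all _ fun x => (Real.exp_pos _).le),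
    integral_exp_mul_Ioi (neg_neg_of_pos hc)]
  simp

lemma lintegral_lintegral_mul_sub {G : Type*} [AddGroup G] [MeasurableSpace G] [MeasurableAdd G]
    [MeasurableSub₂ G] {μ : Measure G} [SFinite μ] [μ.IsAddRightInvariant]
    {k f : G → ℝ≥0∞} (hk : Measurable k) (hf : AEMeasurable f μ) :
    ∫⁻ a, ∫⁻ s, k (a - s) * f s ∂μ ∂μ = (∫⁻ x, k x ∂μ) * ∫⁻ s, f s ∂μ := by
  have hmeas : AEMeasurable (Function.uncurry fun a s => k (a - s) * f s) (μ.prod μ) :=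
    (hk.comp measurable_sub).aemeasurable.mul
      (hf.comp_quasiMeasurePreserving Measure.quasiMeasurePreserving_snd)
  rw [lintegral_lintegral_swap hmeas, ← lintegral_const_mul'' _ hf]
  congr 1 with s
  rw [lintegral_mul_const (f := fun a => k (a - s)) _ (hk.comp (measurable_sub_const s)),
    lintegral_sub_right_eq_self]

lemma enorm_exp_smul_apply_le_expKernel {E F : Type*} [NormedAddCommGroup E] [NormedSpace ℝ E]
    [NormedAddCommGroup F] [NormedSpace ℝ F] {lam μ t : ℝ} {P : E →L[ℝ] F} (ht : 0 ≤ t)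
    (hP : ‖P‖ ≤ Real.exp (-(μ * t))) (v : E) :
    ‖Real.exp (-(lam * t)) • P v‖ₑ ≤ expKernel (lam + μ) t * ‖v‖ₑ := by
  rw [expKernel, indicator_of_mem (mem_Ici.2 ht), ← ofReal_norm, ← ofReal_norm,
    ← ENNReal.ofReal_mul (Real.exp_pos _).le]
  refine ENNReal.ofReal_le_ofReal ?_
  calc ‖Real.exp (-(lam * t)) • P v‖
      ≤ Real.exp (-(lam * t)) * (Real.exp (-(μ * t)) * ‖v‖) := by
        rw [norm_smul, Real.norm_of_nonneg (Real.exp_pos _).le]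
        gcongr
        exact P.le_of_opNorm_le hP v
    _ = Real.exp (-((lam + μ) * t)) * ‖v‖ := by
        rw [← mul_assoc, ← Real.exp_add]; ring_nf

lemma integral_norm_le_of_lintegral_enorm_le {α E : Type*} [MeasurableSpace α] {μ : Measure α}
    [NormedAddCommGroup E] {f : α → E} {B : ℝ} (hB : 0 ≤ B)
    (h : ∫⁻ a, ‖f a‖ₑ ∂μ ≤ ENNReal.ofReal B) : ∫ a, ‖f a‖ ∂μ ≤ B := by
  refine (Real.le_norm_self _).trans ((norm_integral_le_lintegral_norm _).trans ?_)
  simp_rw [norm_norm, ofReal_norm]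
  exact ENNReal.toReal_le_of_le_ofReal hB h

lemma enorm_intervalIntegral_le_setLIntegral {E : Type*} [NormedAddCommGroup E] [NormedSpace ℝ E]
    {a : ℝ} (ha : 0 ≤ a) (f : ℝ → E) :
    ‖∫ s in (0:ℝ)..a, f s‖ₑ ≤ ∫⁻ s in Ioc 0 a, ‖f s‖ₑ := by
  rw [intervalIntegral.integral_of_le ha]
  exact enorm_integral_le_lintegral_enorm _

lemma enorm_duhamel_le {X : Type*} [NormedAddCommGroup X] [NormedSpace ℝ X]
    {Pi : ℝ → ℝ → (X →L[ℝ] X)} {lam μ a : ℝ} {S : Set ℝ} (ha : 0 ≤ a) (hS : Ioc 0 a ⊆ S)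
    (hPi : ∀ τ ∈ Icc 0 a, ‖Pi τ a‖ ≤ Real.exp (-(μ * (a - τ)))) (η : X) (g : ℝ → X) :
    ‖Real.exp (-(lam * a)) • Pi 0 a η +
        ∫ s in (0:ℝ)..a, Real.exp (-(lam * (a - s))) • Pi s a (g s)‖ₑ ≤
      expKernel (lam + μ) a * ‖η‖ₑ +
        ∫⁻ s, expKernel (lam + μ) (a - s) * S.indicator (fun s => ‖g s‖ₑ) s := by
  refine (enorm_add_le _ _).trans (add_le_add ?_ ?_)
  · simpa using enorm_exp_smul_apply_le_expKernel ha (by simpa using hPi 0 ⟨le_rfl, ha⟩) η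
  refine (enorm_intervalIntegral_le_setLIntegral ha _).trans
    ((setLIntegral_mono' measurableSet_Ioc fun s hs => ?_).trans (setLIntegral_le_lintegral _ _))
  rw [indicator_of_mem (hS hs)]
  exact enorm_exp_smul_apply_le_expKernel (sub_nonneg.2 hs.2) (hPi s ⟨hs.1.le, hs.2⟩) _

theorem stmt_3_general {X : Type*} [NormedAddCommGroup X] [NormedSpace ℝ X]
    (ahat : ℝ≥0∞) (μt : ℝ)
    (Pi : ℝ → ℝ → (X →L[ℝ] X))
    (hPi : ∀ τ a : ℝ, 0 ≤ τ → τ ≤ a → ENNReal.ofReal a < ahat →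
      ‖Pi τ a‖ ≤ Real.exp (-(μt * (a - τ))))
    (lam : ℝ) (hlam : -μt < lam)
    (η : X) (g : ℝ → X)
    (hgint : IntegrableOn g {a : ℝ | 0 ≤ a ∧ ENNReal.ofReal a < ahat}) :
    (∫ a in {a : ℝ | 0 ≤ a ∧ ENNReal.ofReal a < ahat},
        ‖Real.exp (-(lam * a)) • Pi 0 a η +
          ∫ s in (0:ℝ)..a, Real.exp (-(lam * (a - s))) • Pi s a (g s)‖) ≤
      (1 / (lam + μt)) *
        (‖η‖ + ∫ a in {a : ℝ | 0 ≤ a ∧ ENNReal.ofReal a < ahat}, ‖g a‖) := by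
  set S := {a : ℝ | 0 ≤ a ∧ ENNReal.ofReal a < ahat}
  set c := lam + μt
  have hc : 0 < c := by linarith
  have hS : MeasurableSet S :=
    measurableSet_Ici.inter (ENNReal.measurable_ofReal measurableSet_Iio)
  have hIoc_sub : ∀ a ∈ S, Ioc 0 a ⊆ S := fun a ha s hs =>
    ⟨hs.1.le, (ENNReal.ofReal_le_ofReal hs.2).trans_lt ha.2⟩
  set G := S.indicator fun s => ‖g s‖ₑ
  have hG : AEMeasurable G := (aemeasurable_indicator_iff hS).2 hgint.enorm.aemeasurable
  have hpointwise : ∀ a ∈ S,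
      ‖Real.exp (-(lam * a)) • Pi 0 a η +
          ∫ s in (0:ℝ)..a, Real.exp (-(lam * (a - s))) • Pi s a (g s)‖ₑ ≤
        expKernel c a * ‖η‖ₑ + ∫⁻ s, expKernel c (a - s) * G s := fun a ha =>
    enorm_duhamel_le ha.1 (hIoc_sub a ha) (fun τ hτ => hPi τ a hτ.1 hτ.2 ha.2) η g
  refine integral_norm_le_of_lintegral_enorm_le (by positivity) ?_
  calc _ ≤ ∫⁻ a in S, expKernel c a * ‖η‖ₑ + ∫⁻ s, expKernel c (a - s) * G s :=
        setLIntegral_mono' hS hpointwise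
    _ ≤ ∫⁻ a, expKernel c a * ‖η‖ₑ + ∫⁻ s, expKernel c (a - s) * G s :=
        setLIntegral_le_lintegral _ _
    _ = ENNReal.ofReal (1 / c) * (‖η‖ₑ + ∫⁻ a in S, ‖g a‖ₑ) := by
        rw [lintegral_add_left ((measurable_expKernel c).mul_const _),
          lintegral_mul_const _ (measurable_expKernel c),
          lintegral_lintegral_mul_sub (measurable_expKernel c) hG, lintegral_indicator hS,
          lintegral_expKernel hc, mul_add]
    _ = ENNReal.ofReal (1 / c * (‖η‖ + ∫ a in S, ‖g a‖)) := by
        rw [← ofReal_integral_norm_eq_lintegral_enorm hgint, ← ofReal_norm,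
          ← ENNReal.ofReal_add (norm_nonneg _) (integral_nonneg fun _ => norm_nonneg _),
          ENNReal.ofReal_mul (by positivity)]

/-- Norm bound for the pseudoresolvent family: for `λ > -μ̃`,
`‖W_λ(η,g)‖_{𝒳₀} = ∫_0^â ‖h(a)‖ da ≤ (λ+μ̃)⁻¹ (‖η‖ + ∫_0^â ‖g(a)‖ da)`. -/
theorem stmt_3 {X : Type*} [NormedAddCommGroup X] [NormedSpace ℝ X] [CompleteSpace X]
    (ahat : ℝ≥0∞) (μt : ℝ) (hμt : 0 < μt)
    (Pi : ℝ → ℝ → (X →L[ℝ] X))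
    (hPi : ∀ τ a : ℝ, 0 ≤ τ → τ ≤ a → ENNReal.ofReal a < ahat →
      ‖Pi τ a‖ ≤ Real.exp (-(μt * (a - τ))))
    (hPicont : ∀ v : X, Continuous fun p : ℝ × ℝ => Pi p.1 p.2 v)
    (lam : ℝ) (hlam : -μt < lam)
    (η : X) (g : ℝ → X)
    (hgmeas : AEStronglyMeasurable g volume)
    (hgint : IntegrableOn g {a : ℝ | 0 ≤ a ∧ ENNReal.ofReal a < ahat}) :
    (∫ a in {a : ℝ | 0 ≤ a ∧ ENNReal.ofReal a < ahat},
        ‖Real.exp (-(lam * a)) • Pi 0 a η +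
          ∫ s in (0:ℝ)..a, Real.exp (-(lam * (a - s))) • Pi s a (g s)‖) ≤
      (1 / (lam + μt)) *
        (‖η‖ + ∫ a in {a : ℝ | 0 ≤ a ∧ ENNReal.ofReal a < ahat}, ‖g a‖) :=
  stmt_3_general ahat μt Pi hPi lam hlam η g hgint
end

section
/- Let u : [τ, â) → X solve the integral equation u(a) = e^{−D(a−τ)} Π(τ,a) η + D ∫_τ^a e^{−D(a−l)} Π(l,a) K u(l) dl, where ‖Π(τ,a)‖ ≤ e^{−(μ̃)(a−τ)} and ‖K‖ ≤ 1, D > 0. Then ‖u(a)‖ ≤ e^{−μ̃(a−τ)} ‖η‖ for all a ≥ τ. In particular the evolution family U(τ,a) with diffusion satisfies ‖U(τ,a)‖ ≤ e^{−μ̃(a−τ)}. -/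
/-!
Writing `w = D + μ̃`, the bounds on `Π` and `K` turn the integral equation into the scalar
inequality `‖u a‖ ≤ e^{-w(a-τ)} ‖η‖ + D ∫_τ^a e^{-w(a-l)} ‖u l‖ dl`. Multiplying by
`e^{w(a-τ)}` removes the exponential kernel, and Grönwall's inequality for
`g ≤ C + D ∫ g` gives `e^{w(a-τ)} ‖u a‖ ≤ e^{D(a-τ)} ‖η‖`, i.e. `‖u a‖ ≤ e^{-μ̃(a-τ)} ‖η‖`.
-/

open scoped ENNReal
open Real Set

theorem le_mul_exp_of_le_add_mul_integral {f : ℝ → ℝ} {a b C K : ℝ} (hf : Continuous f)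
    (hK : 0 ≤ K) (bound : ∀ x ∈ Icc a b, f x ≤ C + K * ∫ t in a..x, f t) :
    ∀ x ∈ Icc a b, f x ≤ C * exp (K * (x - a)) := by
  set H : ℝ → ℝ := fun x => C + K * ∫ t in a..x, f t
  have hH : ∀ x, HasDerivAt H (K * f x) x := fun x =>
    ((hf.integral_hasStrictDerivAt a x).hasDerivAt.const_mul K).const_add C
  have hH_le : ∀ x ∈ Icc a b, H x ≤ gronwallBound C K 0 (x - a) :=
    le_gronwallBound_of_liminf_deriv_right_le (f' := fun x => K * f x)
      (HasDerivAt.continuousOn fun x _ => hH x)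
      (fun x _ _ hr => (hH x).hasDerivWithinAt.liminf_right_slope_le hr)
      (by simp [H])
      (fun x hx => by
        simpa using mul_le_mul_of_nonneg_left (bound x (Ico_subset_Icc_self hx)) hK)
  intro x hx
  rw [← gronwallBound_ε0]
  exact (bound x hx).trans (hH_le x hx)

theorem le_exp_mul_of_le_exp_kernel_integral {f : ℝ → ℝ} {a b C K w : ℝ} (hf : Continuous f)
    (hK : 0 ≤ K)
    (bound : ∀ x ∈ Icc a b,
      f x ≤ exp (-(w * (x - a))) * C + K * ∫ t in a..x, exp (-(w * (x - t))) * f t) :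
    ∀ x ∈ Icc a b, f x ≤ exp ((K - w) * (x - a)) * C := by
  set g : ℝ → ℝ := fun t => exp (w * (t - a)) * f t
  have hg : ∀ x ∈ Icc a b, g x ≤ C + K * ∫ t in a..x, g t := by
    intro x hx
    have hkernel : ∀ t, exp (w * (x - a)) * (exp (-(w * (x - t))) * f t) = g t := fun t => by
      rw [← mul_assoc, ← exp_add]; congr 2; ring
    calc g x ≤ exp (w * (x - a)) *
          (exp (-(w * (x - a))) * C + K * ∫ t in a..x, exp (-(w * (x - t))) * f t) :=
          mul_le_mul_of_nonneg_left (bound x hx) (exp_pos _).le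
      _ = C + K * ∫ t in a..x, g t := by
          rw [mul_add, ← mul_assoc, ← exp_add, add_neg_cancel, exp_zero, one_mul,
            mul_left_comm, ← intervalIntegral.integral_const_mul]
          simp only [hkernel]
  intro x hx
  have := le_mul_exp_of_le_add_mul_integral (by fun_prop) hK hg x hx
  calc f x = exp (-(w * (x - a))) * g x := by simp [g, ← mul_assoc, ← exp_add]
    _ ≤ exp (-(w * (x - a))) * (C * exp (K * (x - a))) :=
        mul_le_mul_of_nonneg_left this (exp_pos _).le
    _ = exp ((K - w) * (x - a)) * C := by
        rw [mul_left_comm, ← exp_add]; ring_nf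

theorem norm_exp_neg_smul_apply_le {E F : Type*} [NormedAddCommGroup E] [NormedSpace ℝ E]
    [NormedAddCommGroup F] [NormedSpace ℝ F] {T : E →L[ℝ] F} {μ D s : ℝ}
    (hT : ‖T‖ ≤ exp (-(μ * s))) (x : E) :
    ‖exp (-(D * s)) • T x‖ ≤ exp (-((D + μ) * s)) * ‖x‖ := by
  rw [norm_smul, norm_of_nonneg (exp_pos _).le]
  calc exp (-(D * s)) * ‖T x‖ ≤ exp (-(D * s)) * (exp (-(μ * s)) * ‖x‖) := by
        gcongr; exact T.le_of_opNorm_le hT x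
    _ = exp (-((D + μ) * s)) * ‖x‖ := by rw [← mul_assoc, ← exp_add]; ring_nf

theorem norm_mild_solution_le {X : Type*} [NormedAddCommGroup X] [NormedSpace ℝ X]
    {μ D τ a : ℝ} {K : X →L[ℝ] X} {Pi : ℝ → ℝ → X →L[ℝ] X} {η : X} {u : ℝ → X}
    (hD : 0 ≤ D) (hK : ‖K‖ ≤ 1) (hPi : ∀ s t, s ≤ t → ‖Pi s t‖ ≤ exp (-(μ * (t - s))))
    (hu : Continuous u) (hτa : τ ≤ a)
    (hua : u a = exp (-(D * (a - τ))) • Pi τ a η +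
      D • ∫ l in τ..a, exp (-(D * (a - l))) • Pi l a (K (u l))) :
    ‖u a‖ ≤ exp (-((D + μ) * (a - τ))) * ‖η‖ +
      D * ∫ l in τ..a, exp (-((D + μ) * (a - l))) * ‖u l‖ := by
  have hPiK : ∀ l ∈ Ioc τ a, ‖Pi l a ∘L K‖ ≤ exp (-(μ * (a - l))) := fun l hl =>
    calc ‖Pi l a ∘L K‖ ≤ ‖Pi l a‖ * ‖K‖ := ContinuousLinearMap.opNorm_comp_le _ _
      _ ≤ exp (-(μ * (a - l))) * 1 := by gcongr; exact hPi l a hl.2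
      _ = exp (-(μ * (a - l))) := mul_one _
  have hbound_cont : Continuous fun l => exp (-((D + μ) * (a - l))) * ‖u l‖ := by fun_prop
  have hintegral : ‖∫ l in τ..a, exp (-(D * (a - l))) • Pi l a (K (u l))‖ ≤
      ∫ l in τ..a, exp (-((D + μ) * (a - l))) * ‖u l‖ :=
    intervalIntegral.norm_integral_le_of_norm_le hτa
      (Filter.Eventually.of_forall fun l hl => norm_exp_neg_smul_apply_le (hPiK l hl) (u l))
      (hbound_cont.intervalIntegrable τ a)
  rw [hua]
  refine (norm_add_le _ _).trans (add_le_add (norm_exp_neg_smul_apply_le (hPi τ a hτa) η) ?_)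
  rw [norm_smul, norm_of_nonneg hD]
  gcongr

theorem stmt_4_general {X : Type*} [NormedAddCommGroup X] [NormedSpace ℝ X]
    (ahat : ℝ≥0∞) (μt D : ℝ) (hD : 0 < D)
    (K : X →L[ℝ] X) (hK : ‖K‖ ≤ 1)
    (Pi : ℝ → ℝ → (X →L[ℝ] X))
    (hPi : ∀ τ a : ℝ, τ ≤ a → ‖Pi τ a‖ ≤ Real.exp (-(μt * (a - τ))))
    (τ : ℝ) (η : X) (u : ℝ → X) (hu : Continuous u)
    (heq : ∀ a : ℝ, τ ≤ a → ENNReal.ofReal a < ahat →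
      u a = Real.exp (-(D * (a - τ))) • Pi τ a η +
        D • ∫ l in τ..a, Real.exp (-(D * (a - l))) • Pi l a (K (u l))) :
    ∀ a : ℝ, τ ≤ a → ENNReal.ofReal a < ahat →
      ‖u a‖ ≤ Real.exp (-(μt * (a - τ))) * ‖η‖ := by
  intro a hτa ha
  have hmild : ∀ x ∈ Icc τ a, ‖u x‖ ≤ exp (-((D + μt) * (x - τ))) * ‖η‖ +
      D * ∫ l in τ..x, exp (-((D + μt) * (x - l))) * ‖u l‖ := fun x hx =>
    norm_mild_solution_le hD.le hK hPi hu hx.1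
      (heq x hx.1 ((ENNReal.ofReal_le_ofReal hx.2).trans_lt ha))
  calc ‖u a‖ ≤ exp ((D - (D + μt)) * (a - τ)) * ‖η‖ :=
        le_exp_mul_of_le_exp_kernel_integral hu.norm hD.le hmild a ⟨hτa, le_rfl⟩
    _ = exp (-(μt * (a - τ))) * ‖η‖ := by ring_nf

/-- Gronwall estimate for the evolution family with nonlocal diffusion: if `u` solves
`u(a) = e^{-D(a-τ)} Π(τ,a)η + D ∫_τ^a e^{-D(a-l)} Π(l,a) K u(l) dl` with
`‖Π(τ,a)‖ ≤ e^{-μ̃(a-τ)}` and `‖K‖ ≤ 1`, then `‖u(a)‖ ≤ e^{-μ̃(a-τ)} ‖η‖`;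
in particular `‖U(τ,a)‖ ≤ e^{-μ̃(a-τ)}`. -/
theorem stmt_4 {X : Type*} [NormedAddCommGroup X] [NormedSpace ℝ X] [CompleteSpace X]
    (ahat : ℝ≥0∞) (μt D : ℝ) (hμt : 0 < μt) (hD : 0 < D)
    (K : X →L[ℝ] X) (hK : ‖K‖ ≤ 1)
    (Pi : ℝ → ℝ → (X →L[ℝ] X))
    (hPi : ∀ τ a : ℝ, τ ≤ a → ‖Pi τ a‖ ≤ Real.exp (-(μt * (a - τ))))
    (τ : ℝ) (hτ : 0 ≤ τ) (η : X) (u : ℝ → X) (hu : Continuous u)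
    (heq : ∀ a : ℝ, τ ≤ a → ENNReal.ofReal a < ahat →
      u a = Real.exp (-(D * (a - τ))) • Pi τ a η +
        D • ∫ l in τ..a, Real.exp (-(D * (a - l))) • Pi l a (K (u l))) :
    ∀ a : ℝ, τ ≤ a → ENNReal.ofReal a < ahat →
      ‖u a‖ ≤ Real.exp (-(μt * (a - τ))) * ‖η‖ :=
  stmt_4_general ahat μt D hD K hK Pi hPi τ η u hu heq
end

section
/- Suppose J ≡ ρ > 0 constant on Ω and β ∈ C(Ω̄) with β_max = max_{Ω̄} β attained but ρ ∫_Ω 1/(β_max − β(x)) dx < 1. Then the operator L v = ρ ∫_Ω v(y) dy − v + (β − μ)v admits no eigenvalue with a positive continuous eigenfunction on Ω̄. -/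
open MeasureTheory
open scoped ENNReal

/-!
A positive eigenfunction turns `L v = λ v` into `v x * (a - β x) = c` with `a = 1 + μ + λ` and
`c = ρ ∫_Ω v ≥ 0`. At the maximum point this gives `a ≥ β_max`, hence `v ≤ c / (β_max - β)`;
integrating, `c ≤ c * ρ ∫_Ω (β_max - β)⁻¹`, so `ρ ∫_Ω (β_max - β)⁻¹ ≥ 1` when `c > 0`. When
`c = 0` the equation forces `β ≡ β_max`, and the integral is infinite.
-/

theorem ENNReal.ofReal_le_ofReal_mul_inv_ofReal {v c d : ℝ} (hc : 0 < c) (hd : 0 ≤ d)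
    (h : v * d ≤ c) : ENNReal.ofReal v ≤ ENNReal.ofReal c * (ENNReal.ofReal d)⁻¹ := by
  rcases hd.eq_or_lt with rfl | hd
  · simp [ENNReal.mul_top (ENNReal.ofReal_pos.mpr hc).ne']
  · rw [← div_eq_mul_inv, ← ENNReal.ofReal_div_of_pos hd]
    exact ENNReal.ofReal_le_ofReal ((le_div_iff₀ hd).mpr h)

theorem one_le_mul_setLIntegral_inv_of_eigenfunction {α : Type*} [MeasurableSpace α]
    {ν : Measure α} {s t : Set α} (hs : MeasurableSet s) (hs₀ : ν s ≠ 0) (hst : s ⊆ t)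
    {v β : α → ℝ} {ρ a : ℝ} {x₀ : α} (hx₀ : x₀ ∈ t) (hρ : 0 < ρ)
    (hv : ∀ x ∈ t, 0 < v x) (hmax : ∀ x ∈ t, β x ≤ β x₀)
    (heq : ∀ x ∈ t, v x * (a - β x) = ρ * ∫ y in s, v y ∂ν) :
    1 ≤ ENNReal.ofReal ρ * ∫⁻ x in s, (ENNReal.ofReal (β x₀ - β x))⁻¹ ∂ν := by
  set I := ∫ y in s, v y ∂ν
  have hI : 0 ≤ I := setIntegral_nonneg hs fun x hx => (hv x (hst hx)).le
  have ha : β x₀ ≤ a := sub_nonneg.mp <|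
    nonneg_of_mul_nonneg_right ((heq x₀ hx₀).symm ▸ mul_nonneg hρ.le hI) (hv x₀ hx₀)
  rcases hI.eq_or_lt with hI₀ | hI₀
  · have hβ : ∀ x ∈ t, β x = a := fun x hx => by
      have := heq x hx
      rw [← hI₀, mul_zero, mul_eq_zero] at this
      exact (sub_eq_zero.mp (this.resolve_left (hv x hx).ne')).symm
    have : ∫⁻ x in s, (ENNReal.ofReal (β x₀ - β x))⁻¹ ∂ν = ∞ := by
      rw [setLIntegral_congr_fun hs (g := fun _ => ∞) fun x hx => by
        simp [hβ x (hst hx), hβ x₀ hx₀]]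
      simp [hs₀]
    simp [this, ENNReal.mul_top (ENNReal.ofReal_pos.mpr hρ).ne']
  · set c := ρ * I
    have hc : 0 < c := mul_pos hρ hI₀
    -- a nonzero Bochner integral certifies integrability
    have hint : Integrable v (ν.restrict s) := Integrable.of_integral_ne_zero hI₀.ne'
    have hbound : ∀ x ∈ s,
        ENNReal.ofReal (v x) ≤ ENNReal.ofReal c * (ENNReal.ofReal (β x₀ - β x))⁻¹ :=
      fun x hx => ENNReal.ofReal_le_ofReal_mul_inv_ofReal hc (sub_nonneg.mpr (hmax x (hst hx)))
        (heq x (hst hx) ▸ mul_le_mul_of_nonneg_left (by linarith) (hv x (hst hx)).le)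
    have hc' : ENNReal.ofReal c ≠ 0 := (ENNReal.ofReal_pos.mpr hc).ne'
    refine (ENNReal.mul_le_mul_iff_right hc' ENNReal.ofReal_ne_top).mp ?_
    calc ENNReal.ofReal c * 1 = ENNReal.ofReal ρ * ∫⁻ x in s, ENNReal.ofReal (v x) ∂ν := by
          rw [mul_one, ENNReal.ofReal_mul hρ.le,
            ofReal_integral_eq_lintegral_ofReal hint
              (ae_restrict_of_forall_mem hs fun x hx => (hv x (hst hx)).le)]
      _ ≤ ENNReal.ofReal ρ *
            ∫⁻ x in s, ENNReal.ofReal c * (ENNReal.ofReal (β x₀ - β x))⁻¹ ∂ν := by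
          gcongr ENNReal.ofReal ρ * ?_
          exact lintegral_mono_ae (ae_restrict_of_forall_mem hs hbound)
      _ = _ := by rw [lintegral_const_mul' _ _ ENNReal.ofReal_ne_top]; ring

theorem stmt_14_general {N : ℕ}
    (Ω : Set (EuclideanSpace ℝ (Fin N))) (hΩo : IsOpen Ω)
    (hΩne : Ω.Nonempty)
    (ρ μ : ℝ) (hρ : 0 < ρ)
    (β : EuclideanSpace ℝ (Fin N) → ℝ)
    (x₀ : EuclideanSpace ℝ (Fin N)) (hx₀ : x₀ ∈ closure Ω)
    (hmax : ∀ x ∈ closure Ω, β x ≤ β x₀)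
    (hcrit : ENNReal.ofReal ρ *
        (∫⁻ x in Ω, (ENNReal.ofReal (β x₀ - β x))⁻¹) < 1) :
    ¬ ∃ (lam : ℝ) (v : EuclideanSpace ℝ (Fin N) → ℝ),
        ContinuousOn v (closure Ω) ∧ (∀ x ∈ closure Ω, 0 < v x) ∧
        ∀ x ∈ closure Ω,
          ρ * (∫ y in Ω, v y) - v x + (β x - μ) * v x = lam * v x := by
  rintro ⟨lam, v, -, hv, heq⟩
  refine hcrit.not_ge <| one_le_mul_setLIntegral_inv_of_eigenfunction (a := 1 + μ + lam)
    hΩo.measurableSet (hΩo.measure_pos volume hΩne).ne' subset_closure hx₀ hρ hv hmax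
    fun x hx => ?_
  linear_combination -heq x hx

/-- Counterexample criterion (Coville): if `J ≡ ρ` on `Ω` and
`ρ ∫_Ω (β_max - β(x))⁻¹ dx < 1`, then the operator
`Lv = ρ∫_Ω v - v + (β - μ)v` admits no eigenvalue with a positive continuous
eigenfunction on `Ω̄`; in particular it has no principal eigenvalue. -/
theorem stmt_14 {N : ℕ}
    (Ω : Set (EuclideanSpace ℝ (Fin N))) (hΩo : IsOpen Ω)
    (hΩb : Bornology.IsBounded Ω) (hΩne : Ω.Nonempty)
    (ρ μ : ℝ) (hρ : 0 < ρ) (hμ : 0 < μ)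
    (β : EuclideanSpace ℝ (Fin N) → ℝ) (hβc : ContinuousOn β (closure Ω))
    (x₀ : EuclideanSpace ℝ (Fin N)) (hx₀ : x₀ ∈ closure Ω)
    (hmax : ∀ x ∈ closure Ω, β x ≤ β x₀)
    (hcrit : ENNReal.ofReal ρ *
        (∫⁻ x in Ω, (ENNReal.ofReal (β x₀ - β x))⁻¹) < 1) :
    ¬ ∃ (lam : ℝ) (v : EuclideanSpace ℝ (Fin N) → ℝ),
        ContinuousOn v (closure Ω) ∧ (∀ x ∈ closure Ω, 0 < v x) ∧
        ∀ x ∈ closure Ω,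
          ρ * (∫ y in Ω, v y) - v x + (β x - μ) * v x = lam * v x :=
  stmt_14_general Ω hΩo hΩne ρ μ hρ β x₀ hx₀ hmax hcrit
end

section
/- The generalized principal eigenvalue λ_p(ℬ^μ + 𝒞) is Lipschitz continuous in the death rate μ: for μ₁, μ₂ ∈ C(Ω̄, L^∞_+(0,a₂)), |λ_p(ℬ^{μ₁}+𝒞) − λ_p(ℬ^{μ₂}+𝒞)| ≤ ‖μ₁−μ₂‖_{C(Ω̄, L^∞(0,a₂))}. -/
open MeasureTheory

/-- The set of test values defining the generalized principal eigenvalue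
`λ_p(ℬ^μ + 𝒞) = sup{λ : ∃ φ > 0 with (-𝒜+λ)(0,φ) ≤ 0}`. -/
def lamPTestSet {N : ℕ} (Ω : Set (EuclideanSpace ℝ (Fin N)))
    (J : EuclideanSpace ℝ (Fin N) → ℝ) (a₂ D : ℝ)
    (β μ : ℝ → EuclideanSpace ℝ (Fin N) → ℝ) : Set ℝ :=
  {lam : ℝ | ∃ φ φ' : ℝ → EuclideanSpace ℝ (Fin N) → ℝ,
    (∀ a ∈ Set.Icc (0:ℝ) a₂, ∀ x ∈ closure Ω, 0 < φ a x) ∧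
    (∀ x ∈ closure Ω, ∀ a ∈ Set.Icc (0:ℝ) a₂,
      HasDerivAt (fun t => φ t x) (φ' a x) a) ∧
    (∀ a ∈ Set.Icc (0:ℝ) a₂, ∀ x ∈ closure Ω,
      φ' a x - D * ((∫ y in Ω, J (x - y) * φ a y) - φ a x) + μ a x * φ a x +
        lam * φ a x ≤ 0) ∧
    (∀ x ∈ closure Ω, φ 0 x ≤ ∫ a in Set.Ioc (0:ℝ) a₂, β a x * φ a x)}

lemma sub_mem_lamPTestSet_of_sub_le {N : ℕ} {Ω : Set (EuclideanSpace ℝ (Fin N))}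
    {J : EuclideanSpace ℝ (Fin N) → ℝ} {a₂ D : ℝ}
    {β μ ν : ℝ → EuclideanSpace ℝ (Fin N) → ℝ} {C lam : ℝ}
    (hC : ∀ a ∈ Set.Icc (0:ℝ) a₂, ∀ x ∈ closure Ω, ν a x - μ a x ≤ C)
    (hlam : lam ∈ lamPTestSet Ω J a₂ D β μ) :
    lam - C ∈ lamPTestSet Ω J a₂ D β ν := by
  obtain ⟨φ, φ', hpos, hderiv, hineq, hbdy⟩ := hlam
  refine ⟨φ, φ', hpos, hderiv, fun a ha x hx => ?_, hbdy⟩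
  have hshift : (ν a x - μ a x - C) * φ a x ≤ 0 :=
    mul_nonpos_of_nonpos_of_nonneg (by linarith [hC a ha x hx]) (hpos a ha x hx).le
  linarith [hineq a ha x hx]

lemma csSup_sub_csSup_le_of_forall_sub_mem {S T : Set ℝ} {C : ℝ} (hS : S.Nonempty)
    (hT : BddAbove T) (h : ∀ s ∈ S, s - C ∈ T) : sSup S - sSup T ≤ C := by
  rw [sub_le_iff_le_add]
  refine csSup_le hS fun s hs => ?_
  linarith [le_csSup hT (h s hs)]

lemma abs_csSup_sub_csSup_le {S T : Set ℝ} {C : ℝ} (hS : S.Nonempty) (hSbdd : BddAbove S)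
    (hT : T.Nonempty) (hTbdd : BddAbove T) (hST : ∀ s ∈ S, s - C ∈ T)
    (hTS : ∀ t ∈ T, t - C ∈ S) : |sSup S - sSup T| ≤ C :=
  abs_sub_le_iff.mpr
    ⟨csSup_sub_csSup_le_of_forall_sub_mem hS hTbdd hST,
      csSup_sub_csSup_le_of_forall_sub_mem hT hSbdd hTS⟩

theorem stmt_17_general {N : ℕ}
    (Ω : Set (EuclideanSpace ℝ (Fin N)))
    (J : EuclideanSpace ℝ (Fin N) → ℝ)
    (a₂ D : ℝ)
    (β μ₁ μ₂ : ℝ → EuclideanSpace ℝ (Fin N) → ℝ)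
    (C : ℝ)
    (hC : ∀ a ∈ Set.Icc (0:ℝ) a₂, ∀ x ∈ closure Ω, |μ₁ a x - μ₂ a x| ≤ C)
    (h1ne : (lamPTestSet Ω J a₂ D β μ₁).Nonempty)
    (h1bdd : BddAbove (lamPTestSet Ω J a₂ D β μ₁))
    (h2ne : (lamPTestSet Ω J a₂ D β μ₂).Nonempty)
    (h2bdd : BddAbove (lamPTestSet Ω J a₂ D β μ₂)) :
    |sSup (lamPTestSet Ω J a₂ D β μ₁) - sSup (lamPTestSet Ω J a₂ D β μ₂)| ≤ C := by
  have h12 : ∀ a ∈ Set.Icc (0:ℝ) a₂, ∀ x ∈ closure Ω, μ₁ a x - μ₂ a x ≤ C :=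
    fun a ha x hx => (le_abs_self _).trans (hC a ha x hx)
  have h21 : ∀ a ∈ Set.Icc (0:ℝ) a₂, ∀ x ∈ closure Ω, μ₂ a x - μ₁ a x ≤ C :=
    fun a ha x hx => (le_abs_self _).trans (abs_sub_comm (μ₁ a x) _ ▸ hC a ha x hx)
  exact abs_csSup_sub_csSup_le h1ne h1bdd h2ne h2bdd
    (fun _ => sub_mem_lamPTestSet_of_sub_le h21) (fun _ => sub_mem_lamPTestSet_of_sub_le h12)

/-- Lipschitz continuity of the generalized principal eigenvalue in the death rate:
if `|μ₁ - μ₂| ≤ C` on `[0,a₂] × Ω̄`, then `|λ_p(ℬ^{μ₁}+𝒞) - λ_p(ℬ^{μ₂}+𝒞)| ≤ C`;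
in particular `λ_p` is `1`-Lipschitz for the `C(Ω̄, L^∞(0,a₂))` norm. -/
theorem stmt_17 {N : ℕ}
    (Ω : Set (EuclideanSpace ℝ (Fin N))) (hΩne : Ω.Nonempty)
    (J : EuclideanSpace ℝ (Fin N) → ℝ) (hJnn : ∀ z, 0 ≤ J z)
    (a₂ D : ℝ) (ha₂ : 0 < a₂) (hD : 0 < D)
    (β μ₁ μ₂ : ℝ → EuclideanSpace ℝ (Fin N) → ℝ)
    (C : ℝ)
    (hC : ∀ a ∈ Set.Icc (0:ℝ) a₂, ∀ x ∈ closure Ω, |μ₁ a x - μ₂ a x| ≤ C)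
    (h1ne : (lamPTestSet Ω J a₂ D β μ₁).Nonempty)
    (h1bdd : BddAbove (lamPTestSet Ω J a₂ D β μ₁))
    (h2ne : (lamPTestSet Ω J a₂ D β μ₂).Nonempty)
    (h2bdd : BddAbove (lamPTestSet Ω J a₂ D β μ₂)) :
    |sSup (lamPTestSet Ω J a₂ D β μ₁) - sSup (lamPTestSet Ω J a₂ D β μ₂)| ≤ C :=
  stmt_17_general Ω J a₂ D β μ₁ μ₂ C hC h1ne h1bdd h2ne h2bdd
end

section
/- Strong maximum principle: assume β vanishes for a ≥ a₂ with ∫_a^{a₂} β̲(l) dl > 0 for all a ∈ [0,a₂), and that 𝒜 possesses a principal eigenvalue λ₁(𝒜) < 0 with positive eigenfunction. Then any u ∈ W^{1,1}((0,a₂), C(Ω̄)) with u ≢ 0 satisfying ∂_a u − D(K−I)u + μu ≥ 0 on (0,a₂)×Ω and u(0,x) ≥ ∫_0^{a₂} β(a,x)u(a,x)da must be strictly positive on [0,a₂] × Ω. -/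
/-
Sliding method for `u ≥ 0`: let `ε ≥ 0` be least with `u + ε φ ≥ 0` on `[0,a₂] × Ω̄`. If `ε > 0`,
then `w = u + ε φ` vanishes somewhere. At a positive age this is impossible, because at a zero
`∂ₐw ≤ 0` and `K w ≥ 0`, while `∂ₐw - D K w ≥ -ε λ₁ φ > 0`; at age `0` the birth condition gives
`w(0,x) ≥ ∫ β w > 0`.

Strict positivity: `e^{C a} u / φ` is nondecreasing in `a`, so a zero of `u` propagates to all
younger ages. At a zero of positive age `∂ₐu ≤ 0` forces `K u = 0`, hence (as `J > 0` near `0` and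
`Ω` is connected) the whole slice vanishes; a zero at age `0` forces `u(·,x) ≡ 0` through the
birth condition and `∫_a^{a₂} β̲ > 0`. So one zero in `[0,a₂] × Ω` makes `u` vanish identically.
-/

open MeasureTheory Set Filter Topology

theorem HasDerivAt.nonpos_of_nonneg_of_eq_zero {f : ℝ → ℝ} {f' a b c : ℝ}
    (hf : HasDerivAt f f' c) (hc : c ∈ Ioc a b) (hnn : ∀ t ∈ Icc a b, 0 ≤ f t) (hz : f c = 0) :
    f' ≤ 0 := by
  have hmin : IsMinOn f (Icc a c) c := fun t ht => by
    simpa only [mem_ofPred_eq, hz] using hnn t ⟨ht.1, ht.2.trans hc.2⟩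
  have hseg : segment ℝ c a ⊆ Icc a c := by rw [segment_symm]; exact segment_subset_Icc hc.1.le
  have := hmin.localize.hasFDerivWithinAt_nonneg hf.hasFDerivAt.hasFDerivWithinAt
    (sub_mem_posTangentConeAt_of_segment_subset hseg)
  simp only [ContinuousLinearMap.toSpanSingleton_apply, smul_eq_mul] at this
  exact nonpos_of_mul_nonneg_right this (sub_neg.2 hc.1)

theorem monotoneOn_exp_mul_of_hasDerivAt {f f' : ℝ → ℝ} {C s t : ℝ}
    (hf : ∀ a ∈ Icc s t, HasDerivAt f (f' a) a) (hf' : ∀ a ∈ Icc s t, -(C * f a) ≤ f' a) :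
    MonotoneOn (fun a => Real.exp (C * a) * f a) (Icc s t) := by
  have hg : ∀ a ∈ Icc s t, HasDerivAt (fun a => Real.exp (C * a) * f a)
      (Real.exp (C * a) * (C * f a + f' a)) a := fun a ha => by
    have hexp : HasDerivAt (fun a => Real.exp (C * a)) (Real.exp (C * a) * C) a := by
      simpa using ((hasDerivAt_id a).const_mul C).exp
    exact (hexp.fun_mul (hf a ha)).congr_deriv (by ring)
  refine monotoneOn_of_hasDerivWithinAt_nonneg (convex_Icc s t)
    (fun a ha => (hg a ha).continuousAt.continuousWithinAt)
    (fun a ha => (hg a (interior_subset ha)).hasDerivWithinAt) fun a ha => ?_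
  have := hf' a (interior_subset ha)
  exact mul_nonneg (Real.exp_pos _).le (by linarith)

theorem IsCompact.exists_nonneg_add_mul_eq_zero {X : Type*} [TopologicalSpace X] {K : Set X}
    (hK : IsCompact K) {u φ : X → ℝ} (hu : ContinuousOn u K) (hφ : ContinuousOn φ K)
    (hφpos : ∀ x ∈ K, 0 < φ x) :
    ∃ ε ≥ 0, (∀ x ∈ K, 0 ≤ u x + ε * φ x) ∧ (ε = 0 ∨ ∃ x ∈ K, u x + ε * φ x = 0) := by
  rcases K.eq_empty_or_nonempty with rfl | hne
  · exact ⟨0, le_rfl, by simp, Or.inl rfl⟩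
  obtain ⟨x₀, hx₀, hmax⟩ := hK.exists_isMaxOn hne
    (hu.neg.div hφ fun x hx => (hφpos x hx).ne')
  refine ⟨max 0 (-u x₀ / φ x₀), le_max_left _ _, fun x hx => ?_, ?_⟩
  · have h : -u x / φ x ≤ max 0 (-u x₀ / φ x₀) := (hmax hx).trans (le_max_right _ _)
    rw [div_le_iff₀ (hφpos x hx)] at h
    linarith
  · rcases le_total (-u x₀ / φ x₀) 0 with h | h
    · exact Or.inl (max_eq_left h)
    · refine Or.inr ⟨x₀, hx₀, ?_⟩
      rw [max_eq_right h]
      field_simp [(hφpos x₀ hx₀).ne']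
      ring

theorem IsCompact.exists_le_mul_of_le {X : Type*} [TopologicalSpace X] {K : Set X}
    (hK : IsCompact K) {f φ : X → ℝ} {M : ℝ} (hf : ∀ x ∈ K, f x ≤ M) (hφ : ContinuousOn φ K)
    (hφpos : ∀ x ∈ K, 0 < φ x) : ∃ C, ∀ x ∈ K, f x ≤ C * φ x := by
  rcases K.eq_empty_or_nonempty with rfl | hne
  · exact ⟨0, by simp⟩
  obtain ⟨x₀, hx₀, hmin⟩ := hK.exists_isMinOn hne hφ
  refine ⟨max M 0 / φ x₀, fun x hx => ?_⟩
  calc f x ≤ max M 0 := (hf x hx).trans (le_max_left _ _)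
    _ = max M 0 / φ x₀ * φ x₀ := by field_simp [(hφpos x₀ hx₀).ne']
    _ ≤ max M 0 / φ x₀ * φ x :=
      mul_le_mul_of_nonneg_left (hmin hx) (div_nonneg (le_max_right _ _) (hφpos x₀ hx₀).le)

theorem ContinuousOn.exists_mem_Ico_pos {v : ℝ → ℝ} {s t : ℝ} (hst : s < t)
    (hv : ContinuousOn v (Icc s t)) {b : ℝ} (hb : b ∈ Icc s t) (hvb : 0 < v b) :
    ∃ c ∈ Ico s t, 0 < v c := by
  rcases hb.2.lt_or_eq with h | rfl
  · exact ⟨b, ⟨hb.1, h⟩, hvb⟩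
  have : (𝓝[Ico s b] b).NeBot := mem_closure_iff_nhdsWithin_neBot.1 (by rwa [closure_Ico hst.ne])
  obtain ⟨c, hc, hc'⟩ :=
    (((hv b hb).mono Ico_subset_Icc_self).eventually (lt_mem_nhds hvb)).and
      self_mem_nhdsWithin |>.exists
  exact ⟨c, hc', hc⟩

theorem setIntegral_pos_of_le_of_pos {α : Type*} [MeasurableSpace α] {ν : Measure α}
    {β βlow v : α → ℝ} {s S : Set α} (hs : MeasurableSet s) (hS : MeasurableSet S) (hsS : s ⊆ S)
    (hβ : ∀ a ∈ S, βlow a ≤ β a) (hβlow_nn : ∀ a ∈ S, 0 ≤ βlow a)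
    (hβlow_pos : 0 < ∫ a in s, βlow a ∂ν) (hv_nn : ∀ a ∈ S, 0 ≤ v a) (hv_pos : ∀ a ∈ s, 0 < v a)
    (hlow : IntegrableOn (fun a => βlow a * v a) S ν)
    (hint : IntegrableOn (fun a => β a * v a) S ν) : 0 < ∫ a in S, β a * v a ∂ν := by
  have hβlow_int : IntegrableOn βlow s ν := .of_integral_ne_zero hβlow_pos.ne'
  have hsupp : 0 < ν (Function.support βlow ∩ s) :=
    (setIntegral_pos_iff_support_of_nonneg_ae
      (ae_restrict_of_forall_mem hs fun a ha => hβlow_nn a (hsS ha)) hβlow_int).1 hβlow_pos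
  have hpos : 0 < ∫ a in s, βlow a * v a ∂ν := by
    refine (setIntegral_pos_iff_support_of_nonneg_ae
      (ae_restrict_of_forall_mem hs fun a ha => mul_nonneg (hβlow_nn a (hsS ha)) (hv_nn a (hsS ha)))
      (hlow.mono_set hsS)).2 (hsupp.trans_le (measure_mono fun a ha => ⟨?_, ha.2⟩))
    exact mul_ne_zero ha.1 (hv_pos a ha.2).ne'
  calc 0 < ∫ a in s, βlow a * v a ∂ν := hpos
    _ ≤ ∫ a in S, βlow a * v a ∂ν :=
      setIntegral_mono_set hlow
        (ae_restrict_of_forall_mem hS fun a ha => mul_nonneg (hβlow_nn a ha) (hv_nn a ha))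
        hsS.eventuallyLE
    _ ≤ ∫ a in S, β a * v a ∂ν :=
      setIntegral_mono_on hlow hint hS fun a ha => mul_le_mul_of_nonneg_right (hβ a ha) (hv_nn a ha)

theorem IntegrableOn.mul_of_mul_continuousOn {β φ v : ℝ → ℝ} {s K : Set ℝ}
    (hβφ : IntegrableOn (fun a => β a * φ a) s) (hs : MeasurableSet s) (hK : IsCompact K)
    (hsK : s ⊆ K) (hφ : ContinuousOn φ K) (hφ0 : ∀ a ∈ K, φ a ≠ 0) (hv : ContinuousOn v K) :
    IntegrableOn (fun a => β a * v a) s :=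
  (hβφ.mul_continuousOn_of_subset (hv.div hφ hφ0) hs hK hsK).congr_fun
    (fun a ha => by simp only [Pi.div_apply]; field_simp [hφ0 a (hsK ha)]) hs

theorem setIntegral_Ioc_mul_pos {β βlow φ v : ℝ → ℝ} {t a₂ : ℝ} (ht : t ∈ Ico 0 a₂)
    (hβlow : ∀ a, βlow a ≤ β a) (hβlownn : ∀ a, 0 ≤ βlow a)
    (hβlowpos : ∀ a ∈ Ico (0:ℝ) a₂, 0 < ∫ l in Ioc a a₂, βlow l)
    (hβφ : IntegrableOn (fun a => β a * φ a) (Ioc 0 a₂)) (hφ : ContinuousOn φ (Icc 0 a₂))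
    (hφpos : ∀ a ∈ Icc (0:ℝ) a₂, 0 < φ a) (hv : ContinuousOn v (Icc 0 a₂))
    (hv_nn : ∀ a ∈ Ioc (0:ℝ) a₂, 0 ≤ v a) (hv_pos : ∀ a ∈ Ioc t a₂, 0 < v a) :
    0 < ∫ a in Ioc 0 a₂, β a * v a := by
  have hβlow_int : IntegrableOn βlow (Ioc 0 a₂) :=
    .of_integral_ne_zero (hβlowpos 0 ⟨le_rfl, ht.1.trans_lt ht.2⟩).ne'
  exact setIntegral_pos_of_le_of_pos measurableSet_Ioc measurableSet_Ioc
    (Ioc_subset_Ioc_left ht.1) (fun a _ => hβlow a) (fun a _ => hβlownn a) (hβlowpos t ht) hv_nn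
    hv_pos (hβlow_int.mul_continuousOn_of_subset hv measurableSet_Ioc isCompact_Icc
      Ioc_subset_Icc_self)
    (IntegrableOn.mul_of_mul_continuousOn hβφ measurableSet_Ioc isCompact_Icc Ioc_subset_Icc_self hφ
      (fun a ha => (hφpos a ha).ne') hv)

theorem IsOpen.eqOn_zero_of_setIntegral_eq_zero {X : Type*} [TopologicalSpace X]
    [MeasurableSpace X] [OpensMeasurableSpace X] {ν : Measure X} [ν.IsOpenPosMeasure]
    {Ω : Set X} (hΩ : IsOpen Ω) {g : X → ℝ} (hg : ContinuousOn g Ω) (hint : IntegrableOn g Ω ν)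
    (hnn : ∀ y ∈ Ω, 0 ≤ g y) (h0 : ∫ y in Ω, g y ∂ν = 0) : EqOn g 0 Ω :=
  ν.eqOn_open_of_ae_eq
    ((integral_eq_zero_iff_of_nonneg_ae (ae_restrict_of_forall_mem hΩ.measurableSet hnn) hint).1 h0)
    hΩ hg continuousOn_const

theorem IsPreconnected.eqOn_zero_of_eventually_eq_zero {X : Type*} [TopologicalSpace X]
    {Ω : Set X} (hΩ : IsPreconnected Ω) (hΩo : IsOpen Ω) {f : X → ℝ} (hf : ContinuousOn f Ω)
    (hprop : ∀ x ∈ Ω, f x = 0 → ∀ᶠ y in 𝓝 x, f y = 0) {x₀ : X} (hx₀ : x₀ ∈ Ω) (h0 : f x₀ = 0) :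
    EqOn f 0 Ω := by
  have hZ : IsOpen (Ω ∩ f ⁻¹' {0}) := isOpen_iff_mem_nhds.2 fun x hx =>
    inter_mem (hΩo.mem_nhds hx.1) (hprop x hx.1 hx.2)
  have hV : IsOpen (Ω ∩ f ⁻¹' {0}ᶜ) := hf.isOpen_inter_preimage hΩo isOpen_compl_singleton
  intro y hy
  by_contra hne
  obtain ⟨z, -, hz, hz'⟩ := hΩ _ _ hZ hV (fun z hz => (em (f z = 0)).imp (⟨hz, ·⟩) (⟨hz, ·⟩))
    ⟨x₀, hx₀, hx₀, h0⟩ ⟨y, hy, hy, hne⟩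
  exact hz'.2 hz.2

section Kernel

variable {E : Type*} [NormedAddCommGroup E] [MeasurableSpace E] [ProperSpace E]
  {ν : Measure E} [IsFiniteMeasureOnCompacts ν] {Ω : Set E} {J : E → ℝ}

theorem integrableOn_kernel_mul [BorelSpace E] (hΩ : Bornology.IsBounded Ω) (hJ : Continuous J)
    {v : E → ℝ} (hv : ContinuousOn v (closure Ω)) (x : E) : IntegrableOn (fun y => J (x - y) * v y) Ω ν :=
  (((hJ.comp (continuous_const.sub continuous_id)).continuousOn.mul hv).integrableOn_compact
    hΩ.isCompact_closure).mono_set subset_closure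

theorem exists_setIntegral_kernel_mul_le (hΩ : Bornology.IsBounded Ω) (hJ : Continuous J)
    {T : Set ℝ} (hT : IsCompact T) {v : ℝ → E → ℝ}
    (hv : ContinuousOn (fun p : ℝ × E => v p.1 p.2) (T ×ˢ closure Ω)) :
    ∃ M, ∀ a ∈ T, ∀ x ∈ closure Ω, ∫ y in Ω, J (x - y) * v a y ∂ν ≤ M := by
  obtain ⟨CJ, hCJ⟩ := (hΩ.isCompact_closure.prod hΩ.isCompact_closure).exists_bound_of_continuousOn
    (hJ.comp (continuous_fst.sub continuous_snd)).continuousOn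
  obtain ⟨Cv, hCv⟩ := (hT.prod hΩ.isCompact_closure).exists_bound_of_continuousOn hv
  refine ⟨CJ * Cv * ν.real Ω, fun a ha x hx => (le_abs_self _).trans ?_⟩
  refine norm_setIntegral_le_of_norm_le_const (f := fun y => J (x - y) * v a y)
    (hΩ.measure_lt_top (μ := ν)) fun y hy => ?_
  rw [norm_mul]
  exact mul_le_mul (hCJ (x, y) ⟨hx, subset_closure hy⟩) (hCv (a, y) ⟨ha, subset_closure hy⟩)
    (norm_nonneg _) ((norm_nonneg _).trans (hCJ (x, y) ⟨hx, subset_closure hy⟩))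

end Kernel

section Supersolution

variable {E : Type*} [NormedAddCommGroup E] {Ω : Set E} {J : E → ℝ}
  {D a₂ lam₁ ε : ℝ} {β μ φ u u' : ℝ → E → ℝ} {βlow : ℝ → ℝ}

theorem supersolution_add_mul_eigenfunction_pos_at_zero (ha₂ : 0 < a₂) (hβlownn : ∀ a, 0 ≤ βlow a)
    (hβlow : ∀ a : ℝ, ∀ x ∈ closure Ω, βlow a ≤ β a x)
    (hβlowpos : ∀ a ∈ Ico (0:ℝ) a₂, 0 < ∫ l in Ioc a a₂, βlow l)
    (hφcont : ContinuousOn (fun p : ℝ × E => φ p.1 p.2) (Icc 0 a₂ ×ˢ closure Ω))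
    (hφpos : ∀ a ∈ Icc (0:ℝ) a₂, ∀ x ∈ closure Ω, 0 < φ a x)
    (hφbc : ∀ x ∈ closure Ω, φ 0 x = ∫ a in Ioc (0:ℝ) a₂, β a x * φ a x)
    (hucont : ContinuousOn (fun p : ℝ × E => u p.1 p.2) (Icc 0 a₂ ×ˢ closure Ω))
    (hubc : ∀ x ∈ closure Ω, (∫ a in Ioc (0:ℝ) a₂, β a x * u a x) ≤ u 0 x)
    {x : E} (hx : x ∈ closure Ω) (hw_pos : ∀ a ∈ Ioc (0:ℝ) a₂, 0 < u a x + ε * φ a x) :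
    0 < u 0 x + ε * φ 0 x := by
  have hu_slice := hucont.uncurry_right x hx
  have hφ_slice := hφcont.uncurry_right x hx
  have hβφ : IntegrableOn (fun a => β a x * φ a x) (Ioc 0 a₂) :=
    .of_integral_ne_zero (by rw [← hφbc x hx]; exact (hφpos 0 ⟨le_rfl, ha₂.le⟩ x hx).ne')
  have hβu := IntegrableOn.mul_of_mul_continuousOn hβφ measurableSet_Ioc isCompact_Icc
    Ioc_subset_Icc_self hφ_slice (fun a ha => (hφpos a ha x hx).ne') hu_slice
  have hβw : 0 < ∫ a in Ioc 0 a₂, β a x * (u a x + ε * φ a x) :=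
    setIntegral_Ioc_mul_pos ⟨le_rfl, ha₂⟩ (fun a => hβlow a x hx) hβlownn hβlowpos hβφ
      hφ_slice (fun a ha => hφpos a ha x hx) (hu_slice.add (continuousOn_const.mul hφ_slice))
      (fun a ha => (hw_pos a ha).le) hw_pos
  simp_rw [mul_add, mul_left_comm _ ε] at hβw
  rw [integral_add hβu (hβφ.const_mul ε), integral_const_mul, ← hφbc x hx] at hβw
  linarith [hubc x hx]

variable [MeasureSpace E]

theorem pos_of_nonneg_of_deriv_sub_kernel_pos {w w' : ℝ → E → ℝ} (hΩ : MeasurableSet Ω)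
    (hJnn : ∀ z, 0 ≤ J z) (hD : 0 ≤ D)
    (hw_nn : ∀ a ∈ Icc (0:ℝ) a₂, ∀ x ∈ closure Ω, 0 ≤ w a x)
    (hwd : ∀ x ∈ closure Ω, ∀ a ∈ Icc (0:ℝ) a₂, HasDerivAt (fun t => w t x) (w' a x) a)
    (hstrict : ∀ a ∈ Ioc (0:ℝ) a₂, ∀ x ∈ closure Ω, w a x = 0 →
      0 < w' a x - D * ∫ y in Ω, J (x - y) * w a y) :
    ∀ a ∈ Ioc (0:ℝ) a₂, ∀ x ∈ closure Ω, 0 < w a x := by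
  intro a ha x hx
  refine (hw_nn a (Ioc_subset_Icc_self ha) x hx).lt_of_ne' fun hz => ?_
  have hder := (hwd x hx a (Ioc_subset_Icc_self ha)).nonpos_of_nonneg_of_eq_zero ha
    (fun t ht => hw_nn t ht x hx) hz
  have hK : 0 ≤ ∫ y in Ω, J (x - y) * w a y := setIntegral_nonneg hΩ fun y hy =>
    mul_nonneg (hJnn _) (hw_nn a (Ioc_subset_Icc_self ha) y (subset_closure hy))
  linarith [hstrict a ha x hx hz, mul_nonneg hD hK]

variable [ProperSpace E] [IsFiniteMeasureOnCompacts (volume : Measure E)]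

theorem supersolution_eq_zero_of_le (hΩ : MeasurableSet Ω) (hΩb : Bornology.IsBounded Ω)
    (hJc : Continuous J) (hJnn : ∀ z, 0 ≤ J z) (hD : 0 ≤ D)
    (hφcont : ContinuousOn (fun p : ℝ × E => φ p.1 p.2) (Icc 0 a₂ ×ˢ closure Ω))
    (hφpos : ∀ a ∈ Icc (0:ℝ) a₂, ∀ x ∈ closure Ω, 0 < φ a x)
    (hφeig : ∀ x ∈ closure Ω, ∀ a ∈ Icc (0:ℝ) a₂,
      HasDerivAt (fun t => φ t x)
        (D * ((∫ y in Ω, J (x - y) * φ a y) - φ a x) - μ a x * φ a x - lam₁ * φ a x) a)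
    (hud : ∀ x ∈ closure Ω, ∀ a ∈ Icc (0:ℝ) a₂, HasDerivAt (fun t => u t x) (u' a x) a)
    (hsuper : ∀ a ∈ Icc (0:ℝ) a₂, ∀ x ∈ closure Ω,
      0 ≤ u' a x - D * ((∫ y in Ω, J (x - y) * u a y) - u a x) + μ a x * u a x)
    (hu_nn : ∀ a ∈ Icc (0:ℝ) a₂, ∀ x ∈ closure Ω, 0 ≤ u a x) {x : E} (hx : x ∈ closure Ω)
    {a a₀ : ℝ} (ha : a ∈ Icc 0 a₂) (ha₀ : a₀ ∈ Icc 0 a₂) (hle : a ≤ a₀) (hz : u a₀ x = 0) :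
    u a x = 0 := by
  obtain ⟨M, hM⟩ := exists_setIntegral_kernel_mul_le (ν := volume) hΩb hJc isCompact_Icc hφcont
  obtain ⟨C, hC⟩ := (isCompact_Icc.prod hΩb.isCompact_closure).exists_le_mul_of_le
    (f := fun p : ℝ × E => ∫ y in Ω, J (p.2 - y) * φ p.1 y)
    (fun p hp => hM p.1 hp.1 p.2 hp.2) hφcont fun p hp => hφpos p.1 hp.1 p.2 hp.2
  -- dividing by `φ` cancels the unbounded `μ`-terms, so `(u/φ)' ≥ -(D C - λ₁) (u/φ)`
  have hmono : MonotoneOn (fun t => Real.exp ((D * C - lam₁) * t) * (u t x / φ t x))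
      (Icc 0 a₂) := by
    refine monotoneOn_exp_mul_of_hasDerivAt
      (fun b hb => (hud x hx b hb).div (hφeig x hx b hb) (hφpos b hb x hx).ne') fun b hb => ?_
    have hφb := hφpos b hb x hx
    have hKu : 0 ≤ ∫ y in Ω, J (x - y) * u b y := setIntegral_nonneg hΩ fun y hy =>
      mul_nonneg (hJnn _) (hu_nn b hb y (subset_closure hy))
    have hKφ : ∫ y in Ω, J (x - y) * φ b y ≤ C * φ b x := hC (b, x) ⟨hb, hx⟩
    have hrw : (D * C - lam₁) * (u b x / φ b x) * φ b x ^ 2 = (D * C - lam₁) * u b x * φ b x := by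
      field_simp
    rw [le_div_iff₀ (by positivity), neg_mul, hrw]
    nlinarith [mul_nonneg hφb.le (hsuper b hb x hx),
      mul_nonneg (mul_nonneg hD (hu_nn b hb x hx)) (sub_nonneg.2 hKφ),
      mul_nonneg (mul_nonneg hD hKu) hφb.le]
  have h := hmono ha ha₀ hle
  simp only [hz, zero_div, mul_zero] at h
  have hq : u a x / φ a x ≤ 0 := nonpos_of_mul_nonpos_right h (Real.exp_pos _)
  rw [div_le_iff₀ (hφpos a ha x hx), zero_mul] at hq
  exact le_antisymm hq (hu_nn a ha x hx)

theorem supersolution_eq_zero_of_eq_zero_at_zero (hΩ : MeasurableSet Ω)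
    (hΩb : Bornology.IsBounded Ω) (hJc : Continuous J) (hJnn : ∀ z, 0 ≤ J z) (ha₂ : 0 < a₂) (hD : 0 ≤ D)
    (hβlownn : ∀ a, 0 ≤ βlow a) (hβlow : ∀ a : ℝ, ∀ x ∈ closure Ω, βlow a ≤ β a x)
    (hβlowpos : ∀ a ∈ Ico (0:ℝ) a₂, 0 < ∫ l in Ioc a a₂, βlow l)
    (hφcont : ContinuousOn (fun p : ℝ × E => φ p.1 p.2) (Icc 0 a₂ ×ˢ closure Ω))
    (hφpos : ∀ a ∈ Icc (0:ℝ) a₂, ∀ x ∈ closure Ω, 0 < φ a x)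
    (hφeig : ∀ x ∈ closure Ω, ∀ a ∈ Icc (0:ℝ) a₂,
      HasDerivAt (fun t => φ t x)
        (D * ((∫ y in Ω, J (x - y) * φ a y) - φ a x) - μ a x * φ a x - lam₁ * φ a x) a)
    (hφbc : ∀ x ∈ closure Ω, φ 0 x = ∫ a in Ioc (0:ℝ) a₂, β a x * φ a x)
    (hucont : ContinuousOn (fun p : ℝ × E => u p.1 p.2) (Icc 0 a₂ ×ˢ closure Ω))
    (hud : ∀ x ∈ closure Ω, ∀ a ∈ Icc (0:ℝ) a₂, HasDerivAt (fun t => u t x) (u' a x) a)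
    (hsuper : ∀ a ∈ Icc (0:ℝ) a₂, ∀ x ∈ closure Ω,
      0 ≤ u' a x - D * ((∫ y in Ω, J (x - y) * u a y) - u a x) + μ a x * u a x)
    (hubc : ∀ x ∈ closure Ω, (∫ a in Ioc (0:ℝ) a₂, β a x * u a x) ≤ u 0 x)
    (hu_nn : ∀ a ∈ Icc (0:ℝ) a₂, ∀ x ∈ closure Ω, 0 ≤ u a x) {x : E} (hx : x ∈ closure Ω)
    (h0 : u 0 x = 0) {b : ℝ} (hb : b ∈ Icc 0 a₂) : u b x = 0 := by
  by_contra hne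
  obtain ⟨t, ht, hut⟩ := (hucont.uncurry_right x hx).exists_mem_Ico_pos ha₂ hb
    ((hu_nn b hb x hx).lt_of_ne' hne)
  have hpos : ∀ c ∈ Ioc t a₂, 0 < u c x := fun c hc =>
    (hu_nn c ⟨ht.1.trans hc.1.le, hc.2⟩ x hx).lt_of_ne' fun hzc =>
      hut.ne' (supersolution_eq_zero_of_le hΩ hΩb hJc hJnn hD hφcont hφpos hφeig hud hsuper hu_nn hx
        (Ico_subset_Icc_self ht) ⟨ht.1.trans hc.1.le, hc.2⟩ hc.1.le hzc)
  have hβφ : IntegrableOn (fun a => β a x * φ a x) (Ioc 0 a₂) :=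
    .of_integral_ne_zero (by rw [← hφbc x hx]; exact (hφpos 0 ⟨le_rfl, ha₂.le⟩ x hx).ne')
  have := setIntegral_Ioc_mul_pos ht (fun a => hβlow a x hx) hβlownn hβlowpos hβφ
    (hφcont.uncurry_right x hx) (fun a ha => hφpos a ha x hx) (hucont.uncurry_right x hx)
    (fun a ha => hu_nn a (Ioc_subset_Icc_self ha) x hx) hpos
  linarith [hubc x hx]

variable [BorelSpace E]

theorem supersolution_add_mul_eigenfunction_pos (hΩ : MeasurableSet Ω)
    (hΩb : Bornology.IsBounded Ω) (hJc : Continuous J) (hJnn : ∀ z, 0 ≤ J z) (hD : 0 ≤ D)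
    (hlam₁ : lam₁ < 0)
    (hφcont : ContinuousOn (fun p : ℝ × E => φ p.1 p.2) (Icc 0 a₂ ×ˢ closure Ω))
    (hφpos : ∀ a ∈ Icc (0:ℝ) a₂, ∀ x ∈ closure Ω, 0 < φ a x)
    (hφeig : ∀ x ∈ closure Ω, ∀ a ∈ Icc (0:ℝ) a₂,
      HasDerivAt (fun t => φ t x)
        (D * ((∫ y in Ω, J (x - y) * φ a y) - φ a x) - μ a x * φ a x - lam₁ * φ a x) a)
    (hucont : ContinuousOn (fun p : ℝ × E => u p.1 p.2) (Icc 0 a₂ ×ˢ closure Ω))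
    (hud : ∀ x ∈ closure Ω, ∀ a ∈ Icc (0:ℝ) a₂, HasDerivAt (fun t => u t x) (u' a x) a)
    (hsuper : ∀ a ∈ Icc (0:ℝ) a₂, ∀ x ∈ closure Ω,
      0 ≤ u' a x - D * ((∫ y in Ω, J (x - y) * u a y) - u a x) + μ a x * u a x)
    (hε : 0 < ε) (hw_nn : ∀ a ∈ Icc (0:ℝ) a₂, ∀ x ∈ closure Ω, 0 ≤ u a x + ε * φ a x) :
    ∀ a ∈ Ioc (0:ℝ) a₂, ∀ x ∈ closure Ω, 0 < u a x + ε * φ a x := by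
  refine pos_of_nonneg_of_deriv_sub_kernel_pos (w := fun a x => u a x + ε * φ a x) hΩ hJnn hD
    hw_nn (fun x hx a ha => (hud x hx a ha).add ((hφeig x hx a ha).const_mul ε))
    fun a ha x hx hz => ?_
  have haI := Ioc_subset_Icc_self ha
  have hKw : ∫ y in Ω, J (x - y) * (u a y + ε * φ a y) =
      (∫ y in Ω, J (x - y) * u a y) + ε * ∫ y in Ω, J (x - y) * φ a y := by
    simp_rw [mul_add, mul_left_comm _ ε]
    rw [integral_add (integrableOn_kernel_mul hΩb hJc (hucont.uncurry_left a haI) x)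
      ((integrableOn_kernel_mul hΩb hJc (hφcont.uncurry_left a haI) x).const_mul ε),
      integral_const_mul]
  -- at a zero of `u + ε φ` the `μ`-terms cancel, leaving `-ε λ₁ φ > 0`
  have hu : u a x = -(ε * φ a x) := by linarith [show u a x + ε * φ a x = 0 from hz]
  have hsup := hsuper a haI x hx
  rw [hu] at hsup
  rw [hKw]
  nlinarith [mul_pos (mul_pos hε (hφpos a haI x hx)) (neg_pos.2 hlam₁)]

theorem supersolution_nonneg
    (hΩ : MeasurableSet Ω) (hΩb : Bornology.IsBounded Ω) (hJc : Continuous J)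
    (hJnn : ∀ z, 0 ≤ J z) (ha₂ : 0 < a₂) (hD : 0 ≤ D)
    (hβlownn : ∀ a, 0 ≤ βlow a) (hβlow : ∀ a : ℝ, ∀ x ∈ closure Ω, βlow a ≤ β a x)
    (hβlowpos : ∀ a ∈ Ico (0:ℝ) a₂, 0 < ∫ l in Ioc a a₂, βlow l) (hlam₁ : lam₁ < 0)
    (hφcont : ContinuousOn (fun p : ℝ × E => φ p.1 p.2) (Icc 0 a₂ ×ˢ closure Ω))
    (hφpos : ∀ a ∈ Icc (0:ℝ) a₂, ∀ x ∈ closure Ω, 0 < φ a x)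
    (hφeig : ∀ x ∈ closure Ω, ∀ a ∈ Icc (0:ℝ) a₂,
      HasDerivAt (fun t => φ t x)
        (D * ((∫ y in Ω, J (x - y) * φ a y) - φ a x) - μ a x * φ a x - lam₁ * φ a x) a)
    (hφbc : ∀ x ∈ closure Ω, φ 0 x = ∫ a in Ioc (0:ℝ) a₂, β a x * φ a x)
    (hucont : ContinuousOn (fun p : ℝ × E => u p.1 p.2) (Icc 0 a₂ ×ˢ closure Ω))
    (hud : ∀ x ∈ closure Ω, ∀ a ∈ Icc (0:ℝ) a₂, HasDerivAt (fun t => u t x) (u' a x) a)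
    (hsuper : ∀ a ∈ Icc (0:ℝ) a₂, ∀ x ∈ closure Ω,
      0 ≤ u' a x - D * ((∫ y in Ω, J (x - y) * u a y) - u a x) + μ a x * u a x)
    (hubc : ∀ x ∈ closure Ω, (∫ a in Ioc (0:ℝ) a₂, β a x * u a x) ≤ u 0 x) :
    ∀ a ∈ Icc (0:ℝ) a₂, ∀ x ∈ closure Ω, 0 ≤ u a x := by
  obtain ⟨ε, hε0, hw_nn, hzero⟩ :=
    (isCompact_Icc.prod hΩb.isCompact_closure).exists_nonneg_add_mul_eq_zero hucont hφcont
      fun p hp => hφpos p.1 hp.1 p.2 hp.2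
  rcases hε0.eq_or_lt with rfl | hε
  · intro a ha x hx
    simpa using hw_nn (a, x) ⟨ha, hx⟩
  obtain ⟨⟨a₀, x₀⟩, ⟨ha₀, hx₀⟩, hz⟩ := hzero.resolve_left hε.ne'
  have hw_pos := supersolution_add_mul_eigenfunction_pos hΩ hΩb hJc hJnn hD hlam₁ hφcont hφpos
    hφeig hucont hud hsuper hε fun a ha x hx => hw_nn (a, x) ⟨ha, hx⟩
  exfalso
  rcases ha₀.1.eq_or_lt with rfl | ha₀pos
  · exact (supersolution_add_mul_eigenfunction_pos_at_zero ha₂ hβlownn hβlow hβlowpos hφcont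
      hφpos hφbc hucont hubc hx₀ fun a ha => hw_pos a ha x₀ hx₀).ne' hz
  · exact (hw_pos a₀ ⟨ha₀pos, ha₀.2⟩ x₀ hx₀).ne' hz

variable [(volume : Measure E).IsOpenPosMeasure]

theorem supersolution_kernel_mul_eqOn_zero (hΩo : IsOpen Ω) (hΩb : Bornology.IsBounded Ω)
    (hJc : Continuous J) (hJnn : ∀ z, 0 ≤ J z) (hD : 0 < D)
    (hucont : ContinuousOn (fun p : ℝ × E => u p.1 p.2) (Icc 0 a₂ ×ˢ closure Ω))
    (hud : ∀ x ∈ closure Ω, ∀ a ∈ Icc (0:ℝ) a₂, HasDerivAt (fun t => u t x) (u' a x) a)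
    (hsuper : ∀ a ∈ Icc (0:ℝ) a₂, ∀ x ∈ closure Ω,
      0 ≤ u' a x - D * ((∫ y in Ω, J (x - y) * u a y) - u a x) + μ a x * u a x)
    (hu_nn : ∀ a ∈ Icc (0:ℝ) a₂, ∀ x ∈ closure Ω, 0 ≤ u a x) {a : ℝ} (ha : a ∈ Ioc 0 a₂)
    {x : E} (hx : x ∈ closure Ω) (hz : u a x = 0) :
    EqOn (fun y => J (x - y) * u a y) 0 Ω := by
  have haI := Ioc_subset_Icc_self ha
  have hder := (hud x hx a haI).nonpos_of_nonneg_of_eq_zero ha (fun t ht => hu_nn t ht x hx) hz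
  have hsup := hsuper a haI x hx
  rw [hz, mul_zero, sub_zero, add_zero] at hsup
  have hnn : ∀ y ∈ Ω, 0 ≤ J (x - y) * u a y := fun y hy =>
    mul_nonneg (hJnn _) (hu_nn a haI y (subset_closure hy))
  refine hΩo.eqOn_zero_of_setIntegral_eq_zero
    ((hJc.comp (continuous_const.sub continuous_id)).continuousOn.mul
      ((hucont.uncurry_left a haI).mono subset_closure))
    (integrableOn_kernel_mul (ν := volume) hΩb hJc (hucont.uncurry_left a haI) x) hnn
    (le_antisymm ?_ (setIntegral_nonneg hΩo.measurableSet hnn))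
  exact nonpos_of_mul_nonpos_right (by linarith) hD

theorem supersolution_eqOn_zero_of_eq_zero (hΩo : IsOpen Ω) (hΩc : IsPreconnected Ω)
    (hΩb : Bornology.IsBounded Ω) (hJc : Continuous J) (hJnn : ∀ z, 0 ≤ J z) (hJ0 : 0 < J 0)
    (hD : 0 < D) (hucont : ContinuousOn (fun p : ℝ × E => u p.1 p.2) (Icc 0 a₂ ×ˢ closure Ω))
    (hud : ∀ x ∈ closure Ω, ∀ a ∈ Icc (0:ℝ) a₂, HasDerivAt (fun t => u t x) (u' a x) a)
    (hsuper : ∀ a ∈ Icc (0:ℝ) a₂, ∀ x ∈ closure Ω,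
      0 ≤ u' a x - D * ((∫ y in Ω, J (x - y) * u a y) - u a x) + μ a x * u a x)
    (hu_nn : ∀ a ∈ Icc (0:ℝ) a₂, ∀ x ∈ closure Ω, 0 ≤ u a x) {a : ℝ} (ha : a ∈ Ioc 0 a₂)
    {x₀ : E} (hx₀ : x₀ ∈ Ω) (hz : u a x₀ = 0) : EqOn (u a) 0 Ω := by
  refine hΩc.eqOn_zero_of_eventually_eq_zero hΩo
    ((hucont.uncurry_left a (Ioc_subset_Icc_self ha)).mono subset_closure)
    (fun x hx hzx => ?_) hx₀ hz
  have hJpos : ∀ᶠ y in 𝓝 x, 0 < J (x - y) :=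
    (hJc.comp (continuous_const.sub continuous_id)).continuousAt.eventually
      (lt_mem_nhds (by simpa using hJ0))
  filter_upwards [hJpos, hΩo.mem_nhds hx] with y hJy hy
  exact (mul_eq_zero.1 (supersolution_kernel_mul_eqOn_zero hΩo hΩb hJc hJnn hD hucont hud hsuper
    hu_nn ha (subset_closure hx) hzx hy)).resolve_left hJy.ne'

end Supersolution

theorem stmt_19_general {N : ℕ}
    (Ω : Set (EuclideanSpace ℝ (Fin N))) (hΩo : IsOpen Ω)
    (hΩb : Bornology.IsBounded Ω) (hΩconn : IsConnected Ω)
    (J : EuclideanSpace ℝ (Fin N) → ℝ) (hJc : Continuous J) (hJnn : ∀ z, 0 ≤ J z)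
    (hJ0 : 0 < J 0)
    (a₂ D : ℝ) (ha₂ : 0 < a₂) (hD : 0 < D)
    (β μ : ℝ → EuclideanSpace ℝ (Fin N) → ℝ)
    -- Assumption: β vanishes for a ≥ a₂, and ∫_a^{a₂} β̲ > 0 for all a ∈ [0,a₂):
    (βlow : ℝ → ℝ) (hβlownn : ∀ a, 0 ≤ βlow a)
    (hβlow : ∀ a : ℝ, ∀ x ∈ closure Ω, βlow a ≤ β a x)
    (hβlowpos : ∀ a ∈ Set.Ico (0:ℝ) a₂, 0 < ∫ l in Set.Ioc a a₂, βlow l)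
    -- principal eigenpair with λ₁ < 0:
    (lam₁ : ℝ) (hlam₁ : lam₁ < 0)
    (φ : ℝ → EuclideanSpace ℝ (Fin N) → ℝ)
    (hφcont : ContinuousOn (fun p : ℝ × EuclideanSpace ℝ (Fin N) => φ p.1 p.2)
      (Set.Icc 0 a₂ ×ˢ closure Ω))
    (hφpos : ∀ a ∈ Set.Icc (0:ℝ) a₂, ∀ x ∈ closure Ω, 0 < φ a x)
    (hφeig : ∀ x ∈ closure Ω, ∀ a ∈ Set.Icc (0:ℝ) a₂,
      HasDerivAt (fun t => φ t x)
        (D * ((∫ y in Ω, J (x - y) * φ a y) - φ a x) - μ a x * φ a x -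
          lam₁ * φ a x) a)
    (hφbc : ∀ x ∈ closure Ω, φ 0 x = ∫ a in Set.Ioc (0:ℝ) a₂, β a x * φ a x)
    -- the supersolution u:
    (u u' : ℝ → EuclideanSpace ℝ (Fin N) → ℝ)
    (hucont : ContinuousOn (fun p : ℝ × EuclideanSpace ℝ (Fin N) => u p.1 p.2)
      (Set.Icc 0 a₂ ×ˢ closure Ω))
    (hud : ∀ x ∈ closure Ω, ∀ a ∈ Set.Icc (0:ℝ) a₂,
      HasDerivAt (fun t => u t x) (u' a x) a)
    (hsuper : ∀ a ∈ Set.Icc (0:ℝ) a₂, ∀ x ∈ closure Ω,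
      0 ≤ u' a x - D * ((∫ y in Ω, J (x - y) * u a y) - u a x) + μ a x * u a x)
    (hubc : ∀ x ∈ closure Ω,
      (∫ a in Set.Ioc (0:ℝ) a₂, β a x * u a x) ≤ u 0 x)
    (hune : ∃ a ∈ Set.Icc (0:ℝ) a₂, ∃ x ∈ Ω, u a x ≠ 0) :
    ∀ a ∈ Set.Icc (0:ℝ) a₂, ∀ x ∈ Ω, 0 < u a x := by
  have hΩ := hΩo.measurableSet
  have hu_nn := supersolution_nonneg hΩ hΩb hJc hJnn ha₂ hD.le hβlownn hβlow hβlowpos hlam₁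
    hφcont hφpos hφeig hφbc hucont hud hsuper hubc
  intro a ha x hx
  refine (hu_nn a ha x (subset_closure hx)).lt_of_ne' fun hz => ?_
  obtain ⟨b, hb, y, hy, hne⟩ := hune
  have hbirth : u 0 x = 0 := supersolution_eq_zero_of_le hΩ hΩb hJc hJnn hD.le hφcont hφpos
    hφeig hud hsuper hu_nn (subset_closure hx) ⟨le_rfl, ha₂.le⟩ ha ha.1 hz
  have hend : u a₂ x = 0 := supersolution_eq_zero_of_eq_zero_at_zero hΩ hΩb hJc hJnn ha₂ hD.le
    hβlownn hβlow hβlowpos hφcont hφpos hφeig hφbc hucont hud hsuper hubc hu_nn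
    (subset_closure hx) hbirth ⟨ha₂.le, le_rfl⟩
  have hslice : u a₂ y = 0 := supersolution_eqOn_zero_of_eq_zero hΩo hΩconn.isPreconnected hΩb
    hJc hJnn hJ0 hD hucont hud hsuper hu_nn ⟨ha₂, le_rfl⟩ hx hend hy
  exact hne (supersolution_eq_zero_of_le hΩ hΩb hJc hJnn hD.le hφcont hφpos hφeig hud hsuper
    hu_nn (subset_closure hy) hb ⟨ha₂.le, le_rfl⟩ hb.2 hslice)

/-- Strong maximum principle: if `𝒜` has a principal eigenvalue `λ₁ < 0` with strictly
positive eigenfunction `φ`, then any nonzero supersolution `u` (i.e.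
`∂_a u - D(K-I)u + μu ≥ 0` with `u(0,·) ≥ ∫_0^{a₂} β(a,·) u(a,·) da`) is strictly
positive on `[0,a₂] × Ω`. -/
theorem stmt_19 {N : ℕ}
    (Ω : Set (EuclideanSpace ℝ (Fin N))) (hΩo : IsOpen Ω)
    (hΩb : Bornology.IsBounded Ω) (hΩconn : IsConnected Ω)
    (J : EuclideanSpace ℝ (Fin N) → ℝ) (hJc : Continuous J) (hJnn : ∀ z, 0 ≤ J z)
    (hJ0 : 0 < J 0) (r : ℝ) (hr : 0 < r)
    (hJsupp : ∀ z, r ≤ ‖z‖ → J z = 0)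
    (a₂ D : ℝ) (ha₂ : 0 < a₂) (hD : 0 < D)
    (β μ : ℝ → EuclideanSpace ℝ (Fin N) → ℝ)
    (hβnn : ∀ a x, 0 ≤ β a x) (hμnn : ∀ a x, 0 ≤ μ a x)
    -- Assumption: β vanishes for a ≥ a₂, and ∫_a^{a₂} β̲ > 0 for all a ∈ [0,a₂):
    (hβsupp : ∀ a : ℝ, a₂ ≤ a → ∀ x, β a x = 0)
    (βlow : ℝ → ℝ) (hβlownn : ∀ a, 0 ≤ βlow a)
    (hβlow : ∀ a : ℝ, ∀ x ∈ closure Ω, βlow a ≤ β a x)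
    (hβlowpos : ∀ a ∈ Set.Ico (0:ℝ) a₂, 0 < ∫ l in Set.Ioc a a₂, βlow l)
    -- principal eigenpair with λ₁ < 0:
    (lam₁ : ℝ) (hlam₁ : lam₁ < 0)
    (φ : ℝ → EuclideanSpace ℝ (Fin N) → ℝ)
    (hφcont : ContinuousOn (fun p : ℝ × EuclideanSpace ℝ (Fin N) => φ p.1 p.2)
      (Set.Icc 0 a₂ ×ˢ closure Ω))
    (hφpos : ∀ a ∈ Set.Icc (0:ℝ) a₂, ∀ x ∈ closure Ω, 0 < φ a x)
    (hφeig : ∀ x ∈ closure Ω, ∀ a ∈ Set.Icc (0:ℝ) a₂,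
      HasDerivAt (fun t => φ t x)
        (D * ((∫ y in Ω, J (x - y) * φ a y) - φ a x) - μ a x * φ a x -
          lam₁ * φ a x) a)
    (hφbc : ∀ x ∈ closure Ω, φ 0 x = ∫ a in Set.Ioc (0:ℝ) a₂, β a x * φ a x)
    -- the supersolution u:
    (u u' : ℝ → EuclideanSpace ℝ (Fin N) → ℝ)
    (hucont : ContinuousOn (fun p : ℝ × EuclideanSpace ℝ (Fin N) => u p.1 p.2)
      (Set.Icc 0 a₂ ×ˢ closure Ω))
    (hud : ∀ x ∈ closure Ω, ∀ a ∈ Set.Icc (0:ℝ) a₂,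
      HasDerivAt (fun t => u t x) (u' a x) a)
    (hsuper : ∀ a ∈ Set.Icc (0:ℝ) a₂, ∀ x ∈ closure Ω,
      0 ≤ u' a x - D * ((∫ y in Ω, J (x - y) * u a y) - u a x) + μ a x * u a x)
    (hubc : ∀ x ∈ closure Ω,
      (∫ a in Set.Ioc (0:ℝ) a₂, β a x * u a x) ≤ u 0 x)
    (hune : ∃ a ∈ Set.Icc (0:ℝ) a₂, ∃ x ∈ Ω, u a x ≠ 0) :
    ∀ a ∈ Set.Icc (0:ℝ) a₂, ∀ x ∈ Ω, 0 < u a x :=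
  stmt_19_general Ω hΩo hΩb hΩconn J hJc hJnn hJ0 a₂ D ha₂ hD β μ βlow hβlownn hβlow hβlowpos lam₁
    hlam₁ φ hφcont hφpos hφeig hφbc u u' hucont hud hsuper hubc hune
end
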